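/- arXiv:1201.5731 — 8 statements merged into one kernel-verified Lean document; each statement's English description precedes it below -/
import Mathlib

section
/- Let p be a prime with p ≡ 1 (mod 24) such that 2 is a fourth power modulo p, and suppose there exist integers a, b, c, d with p = a⁴ + 18b⁴ and 3p = c⁴ + 2d⁴. Then the elliptic curve E_p : y² = x³ + 18p²x over ℚ has rank at least 2; that is, there exist rational points P, Q of E_p such that for all integers m, n, if m•P + n•Q = 0 then m = 0 and n = 0. -/
/-!
For a curve `y² = x³ + A x` with `A ≠ 0`, the map `α` sending `(x, y)` to `x` (and `(0, 0)` to `A`,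
`0` to `1`) is a homomorphism `E(ℚ) → ℚˣ / ℚˣ²`: the three `x`-coordinates of the points on a line
`y = λ x + ν` are the roots of `x³ + A x - (λ x + ν)²`, so their product is `ν²`. Reading off the
parity of a `q`-adic valuation gives homomorphisms `E(ℚ) → ℤ/2`.

The representations `p = a⁴ + 18 b⁴` and `3p = c⁴ + 2 d⁴` give points `Q` and `P` of `E_p` with
`α(Q) = p` and `α(P) = 3p`. The `3`-adic and `p`-adic parities force `m` and `n` to be even whenever
`m P + n Q = 0`. Then `T = (m/2) P + (n/2) Q` satisfies `2T = 0`; the only nonzero such point is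
`(0, 0)`, with `α = 18 p²` of odd `2`-adic valuation, whereas `α(P)` and `α(Q)` have even `2`-adic
valuation. So `T = 0`, and infinite descent gives `m = n = 0`.
-/

def Ep (p : ℕ) : WeierstrassCurve.Affine ℚ :=
  { a₁ := 0, a₂ := 0, a₃ := 0, a₄ := 18 * (p : ℚ) ^ 2, a₆ := 0 }

namespace TwoDescent

open WeierstrassCurve.Affine

section Field

variable {F : Type*} [Field F] {A : F}

def curve (A : F) : WeierstrassCurve.Affine F :=
  { a₁ := 0, a₂ := 0, a₃ := 0, a₄ := A, a₆ := 0 }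

lemma curve_equation_iff {x y : F} : (curve A).Equation x y ↔ y ^ 2 = x ^ 3 + A * x := by
  simp [equation_iff, curve]

lemma curve_negY (x y : F) : (curve A).negY x y = -y := by
  simp [negY, curve]

lemma curve_nonsingular_of_ne_zero [NeZero (2 : F)] {x y : F} (h : y ^ 2 = x ^ 3 + A * x)
    (hy : y ≠ 0) : (curve A).Nonsingular x y := by
  refine (nonsingular_iff x y).mpr ⟨curve_equation_iff.mpr h, Or.inr fun hy' => hy ?_⟩
  have : 2 * y = 0 := by simp only [curve] at hy'; linear_combination hy'
  exact (mul_eq_zero.mp this).resolve_left two_ne_zero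

lemma sq_eq_of_nonsingular {x y : F} (h : (curve A).Nonsingular x y) :
    y ^ 2 = x ^ 3 + A * x :=
  curve_equation_iff.mp h.1

lemma y_eq_zero_of_x_eq_zero {x y : F} (h : y ^ 2 = x ^ 3 + A * x) (hx : x = 0) : y = 0 := by
  subst hx
  simpa using h

lemma x_eq_zero_of_y_eq_zero (hA : ∀ t : F, t ^ 2 ≠ -A) {x y : F} (h : y ^ 2 = x ^ 3 + A * x)
    (hy : y = 0) : x = 0 := by
  subst hy
  have : x * (x ^ 2 + A) = 0 := by linear_combination -h
  exact (mul_eq_zero.mp this).resolve_right fun h' => hA x (eq_neg_of_add_eq_zero_left h')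

variable [DecidableEq F]

lemma addX_zero_left {x₂ y₂ : F} (h₂ : y₂ ^ 2 = x₂ ^ 3 + A * x₂) (hx₂ : x₂ ≠ 0) :
    (curve A).addX 0 x₂ ((curve A).slope 0 x₂ 0 y₂) = A / x₂ := by
  rw [slope_of_X_ne hx₂.symm]
  simp only [addX, curve]
  field_simp
  linear_combination x₂ * h₂

lemma mul_mul_addX_eq_sq {x₁ x₂ y₁ y₂ : F} (h₁ : y₁ ^ 2 = x₁ ^ 3 + A * x₁)
    (h₂ : y₂ ^ 2 = x₂ ^ 3 + A * x₂) (hx : x₁ ≠ x₂) :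
    x₁ * x₂ * (curve A).addX x₁ x₂ ((curve A).slope x₁ x₂ y₁ y₂) =
      ((y₂ * x₁ - y₁ * x₂) / (x₁ - x₂)) ^ 2 := by
  have hsub : x₁ - x₂ ≠ 0 := sub_ne_zero.mpr hx
  rw [slope_of_X_ne hx]
  simp only [addX, curve]
  field_simp
  linear_combination (x₂ * (x₁ - x₂)) * h₁ + (x₁ * (x₂ - x₁)) * h₂

lemma addX_self_eq_sq {x y : F} (h : y ^ 2 = x ^ 3 + A * x) (hy : y ≠ -y) :
    (curve A).addX x x ((curve A).slope x x y y) = ((x ^ 2 - A) / (2 * y)) ^ 2 := by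
  have h2y : 2 * y ≠ 0 := fun h0 => hy (by linear_combination h0)
  have h2 : (2 : F) ≠ 0 := left_ne_zero_of_mul h2y
  have hy0 : y ≠ 0 := right_ne_zero_of_mul h2y
  rw [slope_of_Y_ne rfl (by rwa [curve_negY]), curve_negY, sub_neg_eq_add, ← two_mul]
  simp only [addX, curve]
  field_simp
  linear_combination (-8 * x) * h

def descentMap (A : F) : (curve A).Point → F
  | .zero => 1
  | .some x _ _ => if x = 0 then A else x

@[simp]
lemma descentMap_zero : descentMap A 0 = 1 := rfl

lemma descentMap_some {x y : F} (h : (curve A).Nonsingular x y) :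
    descentMap A (.some x y h) = if x = 0 then A else x := rfl

lemma descentMap_some_of_ne_zero {x y : F} (h : (curve A).Nonsingular x y) (hx : x ≠ 0) :
    descentMap A (.some x y h) = x := if_neg hx

lemma descentMap_ne_zero (hA : A ≠ 0) (P : (curve A).Point) : descentMap A P ≠ 0 := by
  rcases P with _ | ⟨x, y, h⟩
  · exact one_ne_zero
  · rw [descentMap_some]
    split_ifs with hx
    exacts [hA, hx]

lemma isSquare_descentMap_add_self {x y : F} (h : (curve A).Nonsingular x y)
    (hy : y ≠ (curve A).negY x y) :
    IsSquare (descentMap A (.some x y h + .some x y h) * descentMap A (.some x y h) *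
      descentMap A (.some x y h)) := by
  have e := sq_eq_of_nonsingular h
  rw [curve_negY] at hy
  have hx : x ≠ 0 := fun hx => hy (by rw [y_eq_zero_of_x_eq_zero e hx, neg_zero])
  rw [Point.add_self_of_Y_ne (by rwa [curve_negY]), descentMap_some,
    descentMap_some_of_ne_zero h hx, addX_self_eq_sq e hy]
  split_ifs with h₃
  · have : x ^ 2 = A := by
      have h2y : 2 * y ≠ 0 := fun h0 => hy (by linear_combination h0)
      simpa [sub_eq_zero, h2y] using h₃
    exact ⟨x ^ 2, by rw [← this]; ring⟩
  · exact ⟨(x ^ 2 - A) / (2 * y) * x, by ring⟩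

lemma isSquare_descentMap_add_of_x_eq_zero {y₁ x₂ y₂ : F} (h₁ : (curve A).Nonsingular 0 y₁)
    (h₂ : (curve A).Nonsingular x₂ y₂) (hx₂ : x₂ ≠ 0) :
    IsSquare (descentMap A (.some 0 y₁ h₁ + .some x₂ y₂ h₂) * descentMap A (.some 0 y₁ h₁) *
      descentMap A (.some x₂ y₂ h₂)) := by
  have e₂ := sq_eq_of_nonsingular h₂
  obtain rfl := y_eq_zero_of_x_eq_zero (sq_eq_of_nonsingular h₁) rfl
  rw [Point.add_of_X_ne hx₂.symm, descentMap_some, descentMap_some, if_pos rfl,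
    descentMap_some_of_ne_zero h₂ hx₂, addX_zero_left e₂ hx₂]
  split_ifs with h₃
  · exact ⟨0, by rw [div_eq_zero_iff] at h₃; rcases h₃ with h₃ | h₃ <;> simp [h₃]⟩
  · exact ⟨A, by field_simp⟩

lemma isSquare_descentMap_add_of_x_ne {x₁ y₁ x₂ y₂ : F}
    (h₁ : (curve A).Nonsingular x₁ y₁) (h₂ : (curve A).Nonsingular x₂ y₂) (hx : x₁ ≠ x₂)
    (hx₁ : x₁ ≠ 0) (hx₂ : x₂ ≠ 0) :
    IsSquare (descentMap A (.some x₁ y₁ h₁ + .some x₂ y₂ h₂) * descentMap A (.some x₁ y₁ h₁) *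
      descentMap A (.some x₂ y₂ h₂)) := by
  have e₁ := sq_eq_of_nonsingular h₁
  have e₂ := sq_eq_of_nonsingular h₂
  have hV := mul_mul_addX_eq_sq e₁ e₂ hx
  rw [Point.add_of_X_ne hx, descentMap_some, descentMap_some_of_ne_zero h₁ hx₁,
    descentMap_some_of_ne_zero h₂ hx₂]
  split_ifs with h₃
  · -- The chord `y = λ x + ν` has `ν = 0`, so it passes through `(0, 0)`, and the two other
    -- roots of `x³ + A x - (λ x)²` multiply to `A`.
    have hν : y₂ * x₁ - y₁ * x₂ = 0 := by
      rw [h₃, mul_zero, eq_comm] at hV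
      simpa [sub_eq_zero.not.mpr hx] using hV
    have : x₁ * x₂ * (x₂ - x₁) * (x₁ * x₂ - A) = 0 := by
      linear_combination x₂ ^ 2 * e₁ - x₁ ^ 2 * e₂ + (y₁ * x₂ + y₂ * x₁) * hν
    have hA : x₁ * x₂ = A := by
      simpa [hx₁, hx₂, sub_eq_zero, Ne.symm hx] using this
    exact ⟨A, by rw [← hA]; ring⟩
  · exact ⟨(y₂ * x₁ - y₁ * x₂) / (x₁ - x₂), by linear_combination hV⟩

lemma isSquare_descentMap_add (P Q : (curve A).Point) :
    IsSquare (descentMap A (P + Q) * descentMap A P * descentMap A Q) := by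
  rcases P with _ | ⟨x₁, y₁, h₁⟩
  · exact ⟨descentMap A Q, by rw [← Point.zero_def, zero_add, descentMap_zero, mul_one]⟩
  rcases Q with _ | ⟨x₂, y₂, h₂⟩
  · exact ⟨descentMap A (.some _ _ h₁), by rw [← Point.zero_def, add_zero, descentMap_zero,
      mul_one]⟩
  by_cases hxy : x₁ = x₂ ∧ y₁ = (curve A).negY x₂ y₂
  · rw [Point.add_of_Y_eq hxy.1 hxy.2, descentMap_zero, one_mul, descentMap_some, descentMap_some,
      hxy.1]
    exact IsSquare.mul_self _
  by_cases hx : x₁ = x₂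
  · subst hx
    obtain rfl := Y_eq_of_Y_ne h₁.1 h₂.1 rfl fun hy => hxy ⟨rfl, hy⟩
    exact isSquare_descentMap_add_self h₁ fun hy => hxy ⟨rfl, hy⟩
  by_cases hx₁ : x₁ = 0
  · subst hx₁
    exact isSquare_descentMap_add_of_x_eq_zero h₁ h₂ (Ne.symm hx)
  by_cases hx₂ : x₂ = 0
  · subst hx₂
    rw [add_comm, mul_right_comm]
    exact isSquare_descentMap_add_of_x_eq_zero h₂ h₁ hx₁
  exact isSquare_descentMap_add_of_x_ne h₁ h₂ hx hx₁ hx₂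

lemma eq_zero_or_descentMap_eq_of_add_self_eq_zero [NeZero (2 : F)] (hA : ∀ t : F, t ^ 2 ≠ -A)
    {T : (curve A).Point} (hT : T + T = 0) : T = 0 ∨ descentMap A T = A := by
  rcases T with _ | ⟨x, y, h⟩
  · exact Or.inl rfl
  by_cases hy : y = (curve A).negY x y
  · rw [curve_negY, eq_neg_iff_add_eq_zero, ← two_mul] at hy
    have hy0 : y = 0 := (mul_eq_zero.mp hy).resolve_left two_ne_zero
    rw [descentMap_some, if_pos (x_eq_zero_of_y_eq_zero hA (sq_eq_of_nonsingular h) hy0)]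
    exact Or.inr rfl
  · rw [Point.add_self_of_Y_ne hy] at hT
    exact absurd hT (Point.some_ne_zero _)

lemma exists_descentMap_eq_mul_sq [NeZero (2 : F)] {k u w m : F} (hu : u ≠ 0) (hw : w ≠ 0)
    (hm : m ≠ 0) (h : m ^ 2 = k * (k ^ 2 * u ^ 4 + A * w ^ 4)) :
    ∃ P : (curve A).Point, descentMap A P = k * (u / w) ^ 2 := by
  have hk : k ≠ 0 := by
    rintro rfl
    exact hm (pow_eq_zero_iff two_ne_zero |>.mp (by rw [h, zero_mul]))
  have e : (m * u / w ^ 3) ^ 2 = (k * (u / w) ^ 2) ^ 3 + A * (k * (u / w) ^ 2) := by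
    field_simp
    linear_combination h
  exact ⟨.some _ _ (curve_nonsingular_of_ne_zero e (by positivity)),
    descentMap_some_of_ne_zero _ (by positivity)⟩

end Field

def valuationParity (q : ℕ) (r : ℚ) : ZMod 2 :=
  (padicValRat q r : ZMod 2)

section valuationParity

variable {q : ℕ} {A : ℚ}

lemma valuationParity_natCast (n : ℕ) : valuationParity q n = padicValNat q n := by
  simp [valuationParity, padicValRat.of_nat]

variable [Fact q.Prime]

lemma valuationParity_mul {r s : ℚ} (hr : r ≠ 0) (hs : s ≠ 0) :
    valuationParity q (r * s) = valuationParity q r + valuationParity q s := by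
  simp [valuationParity, padicValRat.mul hr hs]

lemma valuationParity_mul_self (s : ℚ) : valuationParity q (s * s) = 0 := by
  rcases eq_or_ne s 0 with rfl | hs
  · simp [valuationParity]
  · rw [valuationParity_mul hs hs, CharTwo.add_self_eq_zero]

lemma valuationParity_mul_sq {r s : ℚ} (hr : r ≠ 0) (hs : s ≠ 0) :
    valuationParity q (r * s ^ 2) = valuationParity q r := by
  rw [sq, valuationParity_mul hr (mul_ne_zero hs hs), valuationParity_mul_self, add_zero]

def descentParity (q : ℕ) [Fact q.Prime] (hA : A ≠ 0) : (curve A).Point →+ ZMod 2 :=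
  AddMonoidHom.mk' (fun P => valuationParity q (descentMap A P)) fun P Q => by
    obtain ⟨s, hs⟩ := isSquare_descentMap_add P Q
    have := congrArg (valuationParity q) hs
    rw [valuationParity_mul_self, valuationParity_mul (by simp [descentMap_ne_zero hA])
      (descentMap_ne_zero hA Q), valuationParity_mul (descentMap_ne_zero hA _)
      (descentMap_ne_zero hA P)] at this
    grind

lemma descentParity_apply (hA : A ≠ 0) (P : (curve A).Point) :
    descentParity q hA P = valuationParity q (descentMap A P) := rfl

lemma exists_descentParity_eq (hA : A ≠ 0) {k : ℕ} {u w m : ℚ} (hu : u ≠ 0) (hw : w ≠ 0)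
    (hm : m ≠ 0) (h : m ^ 2 = k * (k ^ 2 * u ^ 4 + A * w ^ 4)) :
    ∃ P : (curve A).Point, ∀ (q : ℕ) [Fact q.Prime], descentParity q hA P = padicValNat q k := by
  obtain ⟨P, hP⟩ := exists_descentMap_eq_mul_sq hu hw hm h
  have hk : (k : ℚ) ≠ 0 := left_ne_zero_of_mul (hP ▸ descentMap_ne_zero hA P)
  refine ⟨P, fun q _ => ?_⟩
  rw [descentParity_apply, hP, valuationParity_mul_sq hk (by positivity), valuationParity_natCast]

lemma eq_zero_of_add_self_eq_zero_of_descentParity_eq_zero (hA : 0 < A)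
    (hq : valuationParity q A ≠ 0) {T : (curve A).Point} (hT : T + T = 0)
    (hT' : descentParity q hA.ne' T = 0) : T = 0 := by
  have hsq : ∀ t : ℚ, t ^ 2 ≠ -A := fun t ht => by nlinarith [sq_nonneg t]
  refine (eq_zero_or_descentMap_eq_of_add_self_eq_zero hsq hT).resolve_right fun h => hq ?_
  rwa [descentParity_apply, h] at hT'

end valuationParity

end TwoDescent

section Independence

variable {G : Type*} [AddCommGroup G] {P Q : G}

lemma two_dvd_of_zsmul_add_zsmul_eq_zero (f g : G →+ ZMod 2)
    (hfg : f P * g Q - f Q * g P ≠ 0) {m n : ℤ} (h : m • P + n • Q = 0) : 2 ∣ m ∧ 2 ∣ n := by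
  have hf := congrArg f h
  have hg := congrArg g h
  simp only [map_add, map_zsmul, zsmul_eq_mul, map_zero] at hf hg
  refine ⟨(ZMod.intCast_zmod_eq_zero_iff_dvd m 2).mp ?_,
    (ZMod.intCast_zmod_eq_zero_iff_dvd n 2).mp ?_⟩
  · have : (m : ZMod 2) * (f P * g Q - f Q * g P) = 0 := by
      linear_combination g Q * hf - f Q * hg
    exact (mul_eq_zero.mp this).resolve_right hfg
  · have : (n : ZMod 2) * (f P * g Q - f Q * g P) = 0 := by
      linear_combination f P * hg - g P * hf
    exact (mul_eq_zero.mp this).resolve_right hfg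

lemma eq_zero_of_zsmul_add_zsmul_eq_zero
    (hdiv : ∀ m n : ℤ, m • P + n • Q = 0 → 2 ∣ m ∧ 2 ∣ n) (h : G →+ ZMod 2)
    (hP : h P = 0) (hQ : h Q = 0) (htors : ∀ T : G, T + T = 0 → h T = 0 → T = 0)
    {m n : ℤ} (hmn : m • P + n • Q = 0) : m = 0 ∧ n = 0 := by
  induction hk : m.natAbs + n.natAbs using Nat.strong_induction_on generalizing m n with
  | _ k ih =>
  obtain ⟨⟨m, rfl⟩, ⟨n, rfl⟩⟩ := hdiv _ _ hmn
  have hhalf : m • P + n • Q = 0 := by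
    refine htors _ ?_ (by simp [hP, hQ])
    rw [← hmn, two_mul, two_mul, add_zsmul, add_zsmul]
    abel
  by_cases h0 : m = 0 ∧ n = 0
  · omega
  · have := ih _ (by omega) hhalf rfl
    omega

end Independence

lemma ne_zero_of_natCast_eq_pow_four_add {p : ℕ} (hp : p.Prime) (hp2 : p % 2 = 1) {a b : ℤ}
    (h : (p : ℤ) = a ^ 4 + 18 * b ^ 4) : a ≠ 0 ∧ b ≠ 0 := by
  refine ⟨?_, ?_⟩ <;> rintro rfl
  · generalize b ^ 4 = B at h
    omega
  · rw [zero_pow four_ne_zero, mul_zero, add_zero] at h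
    exact not_prime_pow (by norm_num) (h ▸ Nat.prime_iff_prime_int.mp hp)

lemma ne_zero_of_three_mul_eq_pow_four_add {p : ℕ} (hp2 : p % 2 = 1) (hp3 : p % 3 = 1) {c d : ℤ}
    (h : 3 * (p : ℤ) = c ^ 4 + 2 * d ^ 4) : c ≠ 0 ∧ d ≠ 0 := by
  refine ⟨?_, ?_⟩ <;> rintro rfl
  · generalize d ^ 4 = D at h
    omega
  · obtain ⟨e, rfl⟩ : (3 : ℤ) ∣ c :=
      Int.prime_three.dvd_of_dvd_pow (n := 4) ⟨p, by linear_combination -h⟩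
    generalize e ^ 4 = E at h
    ring_nf at h
    omega

open TwoDescent in
theorem rank_ge_two_general (p : ℕ) (hp : p.Prime) (h1 : p % 24 = 1)
    (h3 : ∃ a b : ℤ, (p : ℤ) = a ^ 4 + 18 * b ^ 4)
    (h4 : ∃ c d : ℤ, 3 * (p : ℤ) = c ^ 4 + 2 * d ^ 4) :
    ∃ P Q : (Ep p).Point, ∀ m n : ℤ, m • P + n • Q = 0 → m = 0 ∧ n = 0 := by
  obtain ⟨a, b, hab⟩ := h3
  obtain ⟨c, d, hcd⟩ := h4
  obtain ⟨ha, hb⟩ := ne_zero_of_natCast_eq_pow_four_add hp (by omega) hab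
  obtain ⟨hc, hd⟩ := ne_zero_of_three_mul_eq_pow_four_add (by omega) (by omega) hcd
  have : Fact p.Prime := ⟨hp⟩
  have hp0 : (0 : ℚ) < p := by exact_mod_cast hp.pos
  have hA : 0 < 18 * (p : ℚ) ^ 2 := by positivity
  have hab' : (p : ℚ) = a ^ 4 + 18 * b ^ 4 := by exact_mod_cast hab
  have hcd' : (3 * p : ℚ) = c ^ 4 + 2 * d ^ 4 := by exact_mod_cast hcd
  obtain ⟨P, hP⟩ := exists_descentParity_eq hA.ne' (k := 3 * p) (m := 9 * p ^ 2)
    (Int.cast_ne_zero.mpr hc) (Int.cast_ne_zero.mpr hd) (by positivity)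
    (by push_cast; linear_combination 27 * (p : ℚ) ^ 3 * hcd')
  obtain ⟨Q, hQ⟩ := exists_descentParity_eq hA.ne' (k := p) (m := p ^ 2)
    (Int.cast_ne_zero.mpr ha) (Int.cast_ne_zero.mpr hb) (by positivity)
    (by linear_combination (p : ℚ) ^ 3 * hab')
  have hp2 : 2 ≠ p := by omega
  have hp3 : 3 ≠ p := by omega
  refine ⟨P, Q, fun m n hmn => eq_zero_of_zsmul_add_zsmul_eq_zero
    (fun _ _ => two_dvd_of_zsmul_add_zsmul_eq_zero
      (descentParity 3 hA.ne') (descentParity p hA.ne') ?_)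
    (descentParity 2 hA.ne') ?_ ?_
    (fun T hT => eq_zero_of_add_self_eq_zero_of_descentParity_eq_zero hA ?_ hT) hmn⟩
  · simp [hP, hQ, padicValNat.mul, hp.ne_zero, padicValNat_primes, hp3, hp3.symm]
  · simp [hP, padicValNat.mul, hp.ne_zero, padicValNat_primes, hp2]
  · simp [hQ, padicValNat_primes, hp2]
  · rw [show 18 * (p : ℚ) ^ 2 = (2 : ℕ) * (3 * p) ^ 2 by push_cast; ring,
      valuationParity_mul_sq (by norm_num) (by positivity), valuationParity_natCast,
      padicValNat_self]
    decide

theorem rank_ge_two (p : ℕ) (hp : p.Prime) (h1 : p % 24 = 1)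
    (h2 : ∃ x : ℤ, x ^ 4 ≡ 2 [ZMOD (p : ℤ)])
    (h3 : ∃ a b : ℤ, (p : ℤ) = a ^ 4 + 18 * b ^ 4)
    (h4 : ∃ c d : ℤ, 3 * (p : ℤ) = c ^ 4 + 2 * d ^ 4) :
    ∃ P Q : (Ep p).Point, ∀ m n : ℤ, m • P + n • Q = 0 → m = 0 ∧ n = 0 :=
  rank_ge_two_general p hp h1 h3 h4
end

section
/- Let p be a prime with p ≠ 2 and p ≠ 3. Then there exist z, w in the field ℚ₂ of 2-adic numbers such that w² = 3 + 6p²z⁴. -/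
/-! Take `z = 1`. For odd `p` we have `3 + 6p² ≡ 1 (mod 8)`, and a 2-adic integer congruent to
`1` modulo `8` is a square: Hensel's lemma applies to `X² - a` at the approximate root `1`, since
`‖1 - a‖ ≤ 1/8 < ‖2‖²`. -/

open Polynomial

theorem PadicInt.isSquare_of_norm_sub_one_lt {p : ℕ} [Fact p.Prime] {a : ℤ_[p]}
    (h : ‖a - 1‖ < ‖(2 : ℤ_[p])‖ ^ 2) : IsSquare a := by
  have hF : ‖(X ^ 2 - C a).eval 1‖ < ‖(X ^ 2 - C a).derivative.eval (1 : ℤ_[p])‖ ^ 2 := by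
    simp only [eval_sub, eval_pow, eval_X, eval_C, one_pow, derivative_sub, derivative_X_pow,
      derivative_C, sub_zero, eval_mul, Nat.cast_ofNat, mul_one]
    rwa [norm_sub_rev]
  obtain ⟨r, hr, -⟩ := hensels_lemma hF
  exact ⟨r, by simpa [sub_eq_zero, sq, eq_comm] using hr⟩

theorem PadicInt.isSquare_of_eight_dvd_sub_one {a : ℤ_[2]} (h : (8 : ℤ_[2]) ∣ a - 1) :
    IsSquare a := by
  obtain ⟨c, hc⟩ := h
  have h2 : ‖(2 : ℤ_[2])‖ = 2⁻¹ := by simpa using PadicInt.norm_p (p := 2)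
  apply isSquare_of_norm_sub_one_lt
  calc ‖a - 1‖ = ‖(2 : ℤ_[2])‖ ^ 3 * ‖c‖ := by rw [hc, norm_mul, ← norm_pow]; norm_num
    _ ≤ ‖(2 : ℤ_[2])‖ ^ 3 := mul_le_of_le_one_right (by positivity) (norm_le_one c)
    _ < ‖(2 : ℤ_[2])‖ ^ 2 := by rw [h2]; norm_num

theorem eight_dvd_three_add_six_mul_sq_sub_one {R : Type*} [CommRing R] {x : R} (hx : Odd x) :
    (8 : R) ∣ 3 + 6 * x ^ 2 - 1 := by
  obtain ⟨t, rfl⟩ := hx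
  exact ⟨3 * t ^ 2 + 3 * t + 1, by ring⟩

theorem C3_solvable_Q2_general (p : ℕ) (hp : p.Prime) (hp2 : p ≠ 2) :
    ∃ z w : ℚ_[2], w ^ 2 = 3 + 6 * (p : ℚ_[2]) ^ 2 * z ^ 4 := by
  have hodd : Odd (p : ℤ_[2]) := (hp.odd_of_ne_two hp2).natCast
  obtain ⟨r, hr⟩ :=
    PadicInt.isSquare_of_eight_dvd_sub_one (eight_dvd_three_add_six_mul_sq_sub_one hodd)
  refine ⟨1, r, ?_⟩
  have hr' : 3 + 6 * (p : ℚ_[2]) ^ 2 = r * r := by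
    exact_mod_cast congrArg ((↑) : ℤ_[2] → ℚ_[2]) hr
  rw [sq, ← hr']
  ring

theorem C3_solvable_Q2 (p : ℕ) (hp : p.Prime) (hp2 : p ≠ 2) (hp3 : p ≠ 3) :
    ∃ z w : ℚ_[2], w ^ 2 = 3 + 6 * (p : ℚ_[2]) ^ 2 * z ^ 4 :=
  C3_solvable_Q2_general p hp hp2
end

section
/- Let p be a prime with p ≠ 2 and p ≠ 3. Then there exist z, w in the field ℚ_p of p-adic numbers with w² = 3 + 6p²z⁴ if and only if it is not the case that 3 is a quadratic non-residue modulo p and 2 is a quadratic residue modulo p. In particular, if 3 is a quadratic residue mod p, or if both 3 and 2 are quadratic non-residues mod p, the equation is solvable in ℚ_p; if 3 is a non-residue and 2 is a residue mod p, it is not. -/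
/-!
If `z` is integral, reducing `w ^ 2 = 3 + 6 p² z⁴` modulo `p` makes `3` a square mod `p`;
otherwise `z⁻¹ = p t` with `t` integral, and `(w p t²)² = 3 p² t⁴ + 6` makes `6` a square mod `p`.
Conversely, Hensel's lemma lifts a square root of `3` mod `p` (take `z = 0`), or one of `6` mod `p`
to a square root `r` of `3 p² + 6` (take `z = 1 / p`, `w = r / p`). As `6 = 2 · 3` and the
quadratic character of `𝔽_p` is multiplicative, "`3` or `6` is a square mod `p`" is exactly the
stated condition.
-/

open Polynomial

theorem Int.exists_sq_modEq_iff_isSquare (n : ℕ) (a : ℤ) :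
    (∃ x : ℤ, x ^ 2 ≡ a [ZMOD n]) ↔ IsSquare (a : ZMod n) := by
  simp only [← ZMod.intCast_eq_intCast_iff, Int.cast_pow]
  constructor
  · rintro ⟨x, hx⟩
    exact ⟨x, by rw [← hx, sq]⟩
  · rintro ⟨y, hy⟩
    obtain ⟨x, rfl⟩ := ZMod.intCast_surjective y
    exact ⟨x, by rw [hy, sq]⟩

theorem FiniteField.isSquare_mul_iff {F : Type*} [Field F] [Fintype F] [DecidableEq F]
    {a b : F} (ha : a ≠ 0) (hb : b ≠ 0) :
    IsSquare (a * b) ↔ (IsSquare a ↔ IsSquare b) := by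
  rw [← quadraticChar_one_iff_isSquare (mul_ne_zero ha hb), ← quadraticChar_one_iff_isSquare ha,
    ← quadraticChar_one_iff_isSquare hb, map_mul]
  rcases quadraticChar_dichotomy ha with h | h <;>
    rcases quadraticChar_dichotomy hb with h' | h' <;> simp [h, h']

namespace PadicInt

variable {p : ℕ} [Fact p.Prime]

@[simp, norm_cast]
theorem coe_ofNat (n : ℕ) [n.AtLeastTwo] : ((ofNat(n) : ℤ_[p]) : ℚ_[p]) = ofNat(n) :=
  rfl

theorem toZMod_eq_zero_iff_norm_lt_one (x : ℤ_[p]) : toZMod x = 0 ↔ ‖x‖ < 1 := by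
  rw [← RingHom.mem_ker, ker_toZMod, IsLocalRing.mem_maximalIdeal, mem_nonunits]

theorem norm_eq_one_of_toZMod_ne_zero {x : ℤ_[p]} (hx : toZMod x ≠ 0) : ‖x‖ = 1 :=
  (norm_le_one x).antisymm (not_lt.mp ((toZMod_eq_zero_iff_norm_lt_one x).not.mp hx))

theorem isSquare_of_isSquare_toZMod (h2 : (2 : ZMod p) ≠ 0) {c : ℤ_[p]} (hc : toZMod c ≠ 0)
    (h : IsSquare (toZMod c)) : IsSquare c := by
  obtain ⟨y, hy⟩ := h
  obtain ⟨a, rfl⟩ := ZMod.ringHom_surjective toZMod y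
  have h2a : ‖2 * a‖ = 1 := by
    refine norm_eq_one_of_toZMod_ne_zero ?_
    rw [map_mul, map_ofNat]
    exact mul_ne_zero h2 fun ha => hc (by rw [hy, ha, mul_zero])
  have hnorm : ‖(X ^ 2 - C c).aeval a‖ < ‖(X ^ 2 - C c).derivative.aeval a‖ ^ 2 := by
    simp only [map_sub, map_pow, aeval_X, aeval_C, derivative_X_pow, derivative_C, sub_zero,
      Nat.cast_ofNat, map_mul, Algebra.algebraMap_self, RingHom.id_apply]
    rw [pow_one, h2a, one_pow, ← toZMod_eq_zero_iff_norm_lt_one, map_sub, map_pow, hy, sq,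
      sub_self]
  obtain ⟨z, hz, -⟩ := hensels_lemma hnorm
  refine ⟨z, ?_⟩
  simpa [sub_eq_zero, sq, eq_comm] using hz

end PadicInt

namespace Padic

variable {p : ℕ} [Fact p.Prime]

theorem isSquare_toZMod_of_sq_eq {w : ℚ_[p]} {c : ℤ_[p]} (h : w ^ 2 = c) :
    IsSquare (PadicInt.toZMod c) := by
  have hw : ‖w‖ ≤ 1 := by
    rw [← pow_le_one_iff_of_nonneg (norm_nonneg w) two_ne_zero, ← norm_pow, h]
    exact PadicInt.norm_le_one c
  set W : ℤ_[p] := ⟨w, hw⟩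
  have hc : c = W * W := Subtype.ext (by rw [← h, sq]; rfl)
  exact ⟨PadicInt.toZMod W, by rw [hc, map_mul]⟩

theorem isSquare_three_or_six_of_sq_eq {z w : ℚ_[p]}
    (h : w ^ 2 = 3 + 6 * (p : ℚ_[p]) ^ 2 * z ^ 4) :
    IsSquare (3 : ZMod p) ∨ IsSquare (6 : ZMod p) := by
  by_cases hz : ‖z‖ ≤ 1
  · left
    have hsq :=
      isSquare_toZMod_of_sq_eq (c := 3 + 6 * p ^ 2 * ⟨z, hz⟩ ^ 4) (by push_cast; exact h)
    simpa [map_ofNat] using hsq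
  · right
    have hz1 : 1 < ‖z‖ := not_le.mp hz
    have hzi : ‖z⁻¹‖ < 1 := by rw [norm_inv]; exact inv_lt_one_of_one_lt₀ hz1
    obtain ⟨t, ht⟩ := (PadicInt.norm_lt_one_iff_dvd ⟨z⁻¹, hzi.le⟩).mp hzi
    set u : ℚ_[p] := p * t * z with hu
    have hu1 : u = 1 := by
      have ht' : z⁻¹ = p * t := congrArg Subtype.val ht
      rw [hu, ← ht', inv_mul_cancel₀ (norm_pos_iff.mp (one_pos.trans hz1))]
    have hsq : (w * p * (t : ℚ_[p]) ^ 2) ^ 2 = ((3 * p ^ 2 * t ^ 4 + 6 : ℤ_[p]) : ℚ_[p]) := by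
      push_cast
      linear_combination (p : ℚ_[p]) ^ 2 * t ^ 4 * h + 6 * (u ^ 3 + u ^ 2 + u + 1) * hu1
    simpa [map_ofNat] using isSquare_toZMod_of_sq_eq hsq

theorem exists_sq_eq_three_add_six_mul_iff (h2 : (2 : ZMod p) ≠ 0) (h3 : (3 : ZMod p) ≠ 0) :
    (∃ z w : ℚ_[p], w ^ 2 = 3 + 6 * (p : ℚ_[p]) ^ 2 * z ^ 4) ↔
      IsSquare (3 : ZMod p) ∨ IsSquare (6 : ZMod p) := by
  refine ⟨fun ⟨z, w, h⟩ => isSquare_three_or_six_of_sq_eq h, ?_⟩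
  rintro (hsq | hsq)
  · obtain ⟨r, hr⟩ := PadicInt.isSquare_of_isSquare_toZMod h2 (c := 3)
      (by rwa [map_ofNat]) (by rwa [map_ofNat])
    refine ⟨0, r, ?_⟩
    have hr' : (r : ℚ_[p]) ^ 2 = 3 := by
      rw [sq]; exact_mod_cast (congrArg Subtype.val hr).symm
    simp [hr']
  · have h6 : (6 : ZMod p) ≠ 0 := by
      rw [show (6 : ZMod p) = 2 * 3 by norm_num]; exact mul_ne_zero h2 h3
    have hc : PadicInt.toZMod (3 * (p : ℤ_[p]) ^ 2 + 6) = 6 := by simp [map_ofNat]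
    obtain ⟨r, hr⟩ := PadicInt.isSquare_of_isSquare_toZMod h2 (c := 3 * (p : ℤ_[p]) ^ 2 + 6)
      (by rwa [hc]) (by rwa [hc])
    have hr' : (r : ℚ_[p]) ^ 2 = 3 * p ^ 2 + 6 := by
      rw [sq]; exact_mod_cast (congrArg Subtype.val hr).symm
    have hp : (p : ℚ_[p]) ≠ 0 := Nat.cast_ne_zero.mpr (Fact.out : p.Prime).ne_zero
    refine ⟨(p : ℚ_[p])⁻¹, r * (p : ℚ_[p])⁻¹, ?_⟩
    field_simp
    linear_combination hr'

end Padic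

theorem C3_solvable_Qp_iff (p : ℕ) [Fact p.Prime] (hp2 : p ≠ 2) (hp3 : p ≠ 3) :
    (∃ z w : ℚ_[p], w ^ 2 = 3 + 6 * (p : ℚ_[p]) ^ 2 * z ^ 4) ↔
      ¬((¬∃ x : ℤ, x ^ 2 ≡ 3 [ZMOD (p : ℤ)]) ∧ (∃ x : ℤ, x ^ 2 ≡ 2 [ZMOD (p : ℤ)])) := by
  have h2 : (2 : ZMod p) ≠ 0 := mod_cast ZMod.prime_ne_zero p 2 hp2
  have h3 : (3 : ZMod p) ≠ 0 := mod_cast ZMod.prime_ne_zero p 3 hp3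
  have h6 : (6 : ZMod p) = 2 * 3 := by norm_num
  simp only [Int.exists_sq_modEq_iff_isSquare, Int.cast_ofNat,
    Padic.exists_sq_eq_three_add_six_mul_iff h2 h3, h6, FiniteField.isSquare_mul_iff h2 h3]
  tauto
end

section
/- Let p be a prime with p ≠ 2 and p ≠ 3. Then there exist z, w in the field ℚ₂ of 2-adic numbers with w² = p + 18pz⁴ if and only if p ≡ 1 (mod 8) or p ≡ 3 (mod 8). -/
/-!
If `‖z‖ > 1`, the term `18 p z⁴` dominates `p`, so `‖w‖² = ‖z‖⁴ / 2` and `w / z²` would have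
squared norm `1/2`, which no `2`-adic number has. Hence `z` and `w` are `2`-adic integers, and
reducing `w² = p + 18 p z⁴` modulo `32` leaves a finite check forcing `p ≡ 1, 3 (mod 8)`.
Conversely, integers `≡ 1 (mod 8)` are squares in `ℤ₂` by Hensel's lemma: take `z = 0` when
`p ≡ 1 (mod 8)`, and `z = 1` when `p ≡ 3 (mod 8)`, since then `19 p ≡ 1 (mod 8)`.
-/

open Polynomial

namespace PadicInt

theorem exists_sq_eq_of_norm_sub_one_lt {x : ℤ_[2]} (hx : ‖x - 1‖ < 4⁻¹) :
    ∃ w : ℤ_[2], w ^ 2 = x := by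
  have h2 : ‖(2 : ℤ_[2])‖ = 2⁻¹ := by exact_mod_cast norm_p (p := 2)
  have hF : ‖(X ^ 2 - C x).aeval (1 : ℤ_[2])‖ <
      ‖(X ^ 2 - C x).derivative.aeval (1 : ℤ_[2])‖ ^ 2 := by
    simp only [derivative_X_pow, derivative_C, map_sub, map_pow, map_mul,
      aeval_X, aeval_C, Algebra.algebraMap_self_apply, one_pow, sub_zero, mul_one]
    rw [norm_sub_rev]
    norm_num [h2]
    linarith
  obtain ⟨w, hw, -⟩ := hensels_lemma hF
  exact ⟨w, by simpa [sub_eq_zero] using hw⟩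

theorem exists_sq_eq_natCast_of_mod_eight_eq_one {n : ℕ} (hn : n % 8 = 1) :
    ∃ w : ℤ_[2], w ^ 2 = n := by
  apply exists_sq_eq_of_norm_sub_one_lt
  have h8 : ‖(((n : ℤ) - 1 : ℤ) : ℤ_[2])‖ ≤ (2 : ℝ) ^ (-3 : ℤ) :=
    norm_int_le_pow_iff_dvd.mpr (by push_cast; omega)
  push_cast at h8
  norm_num at h8
  linarith

end PadicInt

-- `1 + 18 z⁴ ≡ 1` or `19 (mod 32)`, and odd squares are `≡ 1 (mod 8)`.
theorem ZMod.val_mod_eight_of_sq_eq_add_eighteen_mul :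
    ∀ c z w : ZMod 32, w ^ 2 = c + 18 * c * z ^ 4 → c.val % 2 = 1 →
      c.val % 8 = 1 ∨ c.val % 8 = 3 := by
  decide

namespace Padic

variable {p : ℕ} [Fact p.Prime]

theorem le_norm_of_one_lt_norm {x : ℚ_[p]} (hx : 1 < ‖x‖) : (p : ℝ) ≤ ‖x‖ := by
  have := (norm_le_pow_iff_norm_lt_pow_add_one x 0).not.mp hx.not_ge
  simpa using this

theorem norm_le_inv_of_norm_lt_one {x : ℚ_[p]} (hx : ‖x‖ < 1) : ‖x‖ ≤ (p : ℝ)⁻¹ := by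
  simpa using (norm_lt_pow_iff_norm_le_pow_sub_one x 0).mp (by simpa using hx)

theorem norm_sq_ne_inv (x : ℚ_[p]) : ‖x‖ ^ 2 ≠ (p : ℝ)⁻¹ := by
  intro h
  have hp1 : (p : ℝ)⁻¹ < 1 := inv_lt_one_of_one_lt₀ (mod_cast (Fact.out : p.Prime).one_lt)
  have hp0 : 0 < (p : ℝ)⁻¹ := inv_pos.mpr (mod_cast (Fact.out : p.Prime).pos)
  have hx : ‖x‖ < 1 := by
    by_contra! hx
    nlinarith
  nlinarith [norm_le_inv_of_norm_lt_one hx, norm_nonneg x]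

theorem norm_le_one_of_sq_eq_add_mul_pow_four {c a z w : ℚ_[p]} (hc : ‖c‖ ≤ 1)
    (ha : ‖a‖ = (p : ℝ)⁻¹) (h : w ^ 2 = c + a * z ^ 4) : ‖z‖ ≤ 1 := by
  by_contra! hz
  have hpz := le_norm_of_one_lt_norm hz
  have hp : (1 : ℝ) < p := mod_cast (Fact.out : p.Prime).one_lt
  have hdom : ‖c‖ < ‖a * z ^ 4‖ := by
    rw [norm_mul, norm_pow, ha, inv_mul_eq_div, lt_div_iff₀ (by positivity)]
    have hp4 : (p : ℝ) < (p : ℝ) ^ 4 := lt_self_pow₀ hp (by norm_num)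
    nlinarith [pow_le_pow_left₀ (by positivity) hpz 4]
  have hw : ‖w‖ ^ 2 = ‖a‖ * ‖z‖ ^ 4 := by
    rw [← norm_pow, h, add_eq_max_of_ne hdom.ne, max_eq_right hdom.le, norm_mul, norm_pow]
  apply norm_sq_ne_inv (w / z ^ 2)
  have hz0 : ‖z‖ ≠ 0 := by positivity
  rw [norm_div, norm_pow, div_pow, hw, ha]
  field_simp

end Padic

theorem PadicInt.mod_eight_of_sq_eq_add_eighteen_mul {n : ℕ} (hn : n % 2 = 1) {z w : ℤ_[2]}
    (h : w ^ 2 = n + 18 * n * z ^ 4) : n % 8 = 1 ∨ n % 8 = 3 := by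
  have h32 := congrArg (PadicInt.toZModPow 5) h
  simp only [map_pow, map_add, map_mul, map_natCast, map_ofNat] at h32
  have hval : ((n : ZMod (2 ^ 5))).val = n % 32 := ZMod.val_natCast _ n
  have := ZMod.val_mod_eight_of_sq_eq_add_eighteen_mul _ _ _ h32 (by rw [hval]; omega)
  rw [hval] at this
  omega

theorem Padic.norm_le_one_of_sq_eq_add_eighteen_mul {n : ℕ} (hn : n % 2 = 1) {z w : ℚ_[2]}
    (h : w ^ 2 = n + 18 * n * z ^ 4) : ‖z‖ ≤ 1 ∧ ‖w‖ ≤ 1 := by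
  have hodd : Nat.Coprime 2 n := Nat.coprime_two_left.mpr (Nat.odd_iff.mpr hn)
  have hodd9 : Nat.Coprime 2 (9 * n) := Nat.coprime_two_left.mpr (Nat.odd_iff.mpr (by omega))
  have hn1 : ‖(n : ℚ_[2])‖ = 1 := norm_natCast_eq_one_iff.mpr hodd
  have h18 : ‖(18 * n : ℚ_[2])‖ = 2⁻¹ := by
    have : (18 * n : ℚ_[2]) = (2 : ℕ) * ((9 * n : ℕ) : ℚ_[2]) := by push_cast; ring
    rw [this, norm_mul, norm_natCast_eq_one_iff.mpr hodd9, norm_p]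
    norm_num
  have hz := norm_le_one_of_sq_eq_add_mul_pow_four hn1.le (by exact_mod_cast h18) h
  refine ⟨hz, ?_⟩
  have hw2 : ‖w‖ ^ 2 ≤ 1 := by
    rw [← norm_pow, h]
    refine (nonarchimedean _ _).trans (max_le hn1.le ?_)
    rw [norm_mul, norm_pow, h18]
    nlinarith [pow_le_one₀ (norm_nonneg z) hz (n := 4)]
  exact (pow_le_one_iff_of_nonneg (norm_nonneg w) two_ne_zero).mp hw2

theorem exists_sq_eq_add_eighteen_mul_iff {n : ℕ} (hn : n % 2 = 1) :
    (∃ z w : ℚ_[2], w ^ 2 = n + 18 * n * z ^ 4) ↔ (n % 8 = 1 ∨ n % 8 = 3) := by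
  constructor
  · rintro ⟨z, w, h⟩
    obtain ⟨hz, hw⟩ := Padic.norm_le_one_of_sq_eq_add_eighteen_mul hn h
    refine PadicInt.mod_eight_of_sq_eq_add_eighteen_mul hn (z := ⟨z, hz⟩) (w := ⟨w, hw⟩) ?_
    exact Subtype.ext (by push_cast; exact h)
  · have hsq (m : ℕ) (hm : m % 8 = 1) : ∃ w : ℚ_[2], w ^ 2 = m := by
      obtain ⟨w, hw⟩ := PadicInt.exists_sq_eq_natCast_of_mod_eight_eq_one hm
      exact ⟨w, by rw [← PadicInt.coe_pow, hw, PadicInt.coe_natCast]⟩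
    rintro (h1 | h3)
    · obtain ⟨w, hw⟩ := hsq n h1
      exact ⟨0, w, by simp [hw]⟩
    · obtain ⟨w, hw⟩ := hsq (19 * n) (by omega)
      exact ⟨1, w, by rw [hw]; push_cast; ring⟩

theorem Cp_solvable_Q2_iff_general (p : ℕ) (hp : p.Prime) (hp2 : p ≠ 2) :
    (∃ z w : ℚ_[2], w ^ 2 = (p : ℚ_[2]) + 18 * (p : ℚ_[2]) * z ^ 4) ↔
      (p % 8 = 1 ∨ p % 8 = 3) :=
  exists_sq_eq_add_eighteen_mul_iff (Nat.odd_iff.mp (hp.odd_of_ne_two hp2))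

theorem Cp_solvable_Q2_iff (p : ℕ) (hp : p.Prime) (hp2 : p ≠ 2) (hp3 : p ≠ 3) :
    (∃ z w : ℚ_[2], w ^ 2 = (p : ℚ_[2]) + 18 * (p : ℚ_[2]) * z ^ 4) ↔
      (p % 8 = 1 ∨ p % 8 = 3) :=
  Cp_solvable_Q2_iff_general p hp hp2
end

section
/- Let p be a prime with p ≠ 2 and p ≠ 3. Then there exist z, w in the field ℚ₃ of 3-adic numbers such that w² = p + 18pz⁴. -/
open Polynomial in
theorem PadicInt.exists_sq_eq_of_norm_sub_one_lt_s11 {p : ℕ} [Fact p.Prime] (hp : p ≠ 2) {c : ℤ_[p]}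
    (hc : ‖c - 1‖ < 1) : ∃ s : ℤ_[p], s ^ 2 = c := by
  have h2 : ‖(2 : ℤ_[p])‖ = 1 := by
    simpa using PadicInt.norm_natCast_eq_one_iff.2
      ((Nat.coprime_primes (Fact.out) Nat.prime_two).2 hp)
  obtain ⟨s, hs, -⟩ := hensels_lemma (p := p) (F := X ^ 2 - C c) (a := 1)
    (by simpa [one_add_one_eq_two, h2, norm_sub_rev] using hc)
  exact ⟨s, by simpa [sub_eq_zero] using hs⟩

theorem Padic.isSquare_intCast_of_modEq_one {p : ℕ} [Fact p.Prime] (hp : p ≠ 2) {n : ℤ}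
    (hn : n ≡ 1 [ZMOD p]) : IsSquare (n : ℚ_[p]) := by
  obtain ⟨s, hs⟩ := PadicInt.exists_sq_eq_of_norm_sub_one_lt_s11 hp (c := n) <| by
    rw [← Int.cast_one, ← Int.cast_sub, PadicInt.norm_int_lt_one_iff_dvd]
    exact Int.ModEq.dvd hn.symm
  exact ⟨s, by rw [← PadicInt.coe_intCast, ← hs]; push_cast; ring⟩

theorem Cp_solvable_Q3_general (p : ℕ) (hp : p.Prime) (hp3 : p ≠ 3) :
    ∃ z w : ℚ_[3], w ^ 2 = (p : ℚ_[3]) + 18 * (p : ℚ_[3]) * z ^ 4 := by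
  have h3 : ¬ 3 ∣ p := fun h => hp3 ((Nat.prime_dvd_prime_iff_eq Nat.prime_three hp).1 h).symm
  -- 11 ≡ 2 mod 3, so one of p and 11p is ≡ 1 mod 3; and p + 18p(1/3)^4 = 11p/3^2.
  have hmod : (p : ℤ) ≡ 1 [ZMOD 3] ∨ 11 * (p : ℤ) ≡ 1 [ZMOD 3] := by
    simp only [Int.ModEq]; omega
  rcases hmod with hp1 | hp11
  · obtain ⟨w, hw⟩ := Padic.isSquare_intCast_of_modEq_one (by norm_num) hp1
    exact ⟨0, w, by push_cast at hw; rw [hw]; ring⟩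
  · obtain ⟨s, hs⟩ := Padic.isSquare_intCast_of_modEq_one (by norm_num) hp11
    refine ⟨3⁻¹, s / 3, ?_⟩
    push_cast at hs
    field_simp
    linear_combination (-9 : ℚ_[3]) * hs

theorem Cp_solvable_Q3 (p : ℕ) (hp : p.Prime) (hp2 : p ≠ 2) (hp3 : p ≠ 3) :
    ∃ z w : ℚ_[3], w ^ 2 = (p : ℚ_[3]) + 18 * (p : ℚ_[3]) * z ^ 4 :=
  Cp_solvable_Q3_general p hp hp3
end

section
/- Let p be a prime with p ≡ 1 (mod 8). Then there exist z, w in the field ℚ_p of p-adic numbers with w² = p + 18pz⁴ if and only if −18 is a fourth power modulo p, i.e. there exists an integer x with x⁴ ≡ −18 (mod p). -/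
/-!
Write the equation as `w² = p u` with `u = 1 + 18 z⁴`, so that `u` has odd valuation. If `z` were
not integral, `u` would have the even valuation `4 v(z)`; hence `z ∈ ℤ_p`, `u ≡ 0 (mod p)`, and
`z⁻¹` is a fourth root of `-18` modulo `p`. Conversely, Hensel's lemma lifts a fourth root of `-18`
modulo `p` to `t ∈ ℤ_p` with `t⁴ = -18`, and gives `s ∈ ℤ_p` with `s⁴ = 1 - p`; then `z = s / t`
satisfies `18 z⁴ = p - 1`, so `p + 18 p z⁴ = p²` and `w = p`.
-/

lemma inv_pow_eq_neg_of_one_add_mul_pow_eq_zero {K : Type*} [Field K] {a ζ : K} {n : ℕ}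
    (h : 1 + a * ζ ^ n = 0) : ζ⁻¹ ^ n = -a := by
  rw [inv_pow]
  exact inv_eq_of_mul_eq_one_right (by linear_combination -h)

lemma ZMod.exists_intCast_pow_modEq_iff {m k : ℕ} {a : ℤ} :
    (∃ x : ℤ, x ^ k ≡ a [ZMOD m]) ↔ ∃ ξ : ZMod m, ξ ^ k = a := by
  simp_rw [← ZMod.intCast_eq_intCast_iff]
  exact ⟨fun ⟨x, hx⟩ => ⟨x, by simpa using hx⟩, fun ⟨ξ, hξ⟩ => ⟨ξ.cast, by simpa using hξ⟩⟩

namespace Padic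

variable {p : ℕ} [Fact p.Prime]

lemma norm_eq_one_iff_valuation_eq_zero {x : ℚ_[p]} (hx : x ≠ 0) :
    ‖x‖ = 1 ↔ x.valuation = 0 := by
  have hp : (1 : ℝ) < p := mod_cast (Fact.out : p.Prime).one_lt
  rw [norm_eq_zpow_neg_valuation hx, zpow_eq_one_iff_right₀ (by positivity) hp.ne', neg_eq_zero]

lemma valuation_add_eq_left {x y : ℚ_[p]} (hx : x ≠ 0) (h : x.valuation < y.valuation) :
    (x + y).valuation = x.valuation := by
  rcases eq_or_ne y 0 with rfl | hy
  · rw [add_zero]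
  have hp : (1 : ℝ) < p := mod_cast (Fact.out : p.Prime).one_lt
  have hlt : ‖y‖ < ‖x‖ := by
    rw [norm_eq_zpow_neg_valuation hx, norm_eq_zpow_neg_valuation hy]
    exact zpow_lt_zpow_right₀ hp (neg_lt_neg h)
  have hnorm : ‖x + y‖ = ‖x‖ := by rw [add_eq_max_of_ne hlt.ne', max_eq_left hlt.le]
  have hxy : x + y ≠ 0 := norm_ne_zero_iff.mp (hnorm ▸ norm_ne_zero_iff.mpr hx)
  rwa [norm_eq_zpow_neg_valuation hxy, norm_eq_zpow_neg_valuation hx,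
    zpow_right_inj₀ (by positivity) hp.ne', neg_inj] at hnorm

lemma odd_valuation_of_sq_eq_p_mul {u w : ℚ_[p]} (hu : u ≠ 0) (h : w ^ 2 = p * u) :
    Odd u.valuation := by
  have hp : (p : ℚ_[p]) ≠ 0 := Nat.cast_ne_zero.mpr (Fact.out : p.Prime).ne_zero
  have hv := congrArg valuation h
  rw [valuation_pow, valuation_mul hp hu, valuation_p] at hv
  exact ⟨w.valuation - 1, by push_cast at hv; omega⟩

lemma norm_le_one_of_sq_eq_p_mul_one_add_mul_pow {n : ℕ} (hn : Even n) (hn0 : n ≠ 0)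
    {a z w : ℚ_[p]} (ha : ‖a‖ = 1) (h : w ^ 2 = p * (1 + a * z ^ n)) : ‖z‖ ≤ 1 := by
  rw [norm_le_one_iff_val_nonneg]
  by_contra! hz
  have hz0 : z ≠ 0 := by rintro rfl; simp at hz
  have ha0 : a ≠ 0 := norm_ne_zero_iff.mp (ha ▸ one_ne_zero)
  have hazn : a * z ^ n ≠ 0 := mul_ne_zero ha0 (pow_ne_zero n hz0)
  have hv : (a * z ^ n).valuation = n * z.valuation := by
    rw [valuation_mul ha0 (pow_ne_zero n hz0), (norm_eq_one_iff_valuation_eq_zero ha0).mp ha,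
      valuation_pow, zero_add]
  have hneg : (n : ℤ) * z.valuation < 0 := mul_neg_of_pos_of_neg (by omega) hz
  have hu : (1 + a * z ^ n).valuation = n * z.valuation := by
    rw [add_comm, valuation_add_eq_left hazn (by rw [hv, valuation_one]; exact hneg), hv]
  have hu0 : 1 + a * z ^ n ≠ 0 := by
    intro h0
    rw [h0, valuation_zero] at hu
    omega
  have heven : Even (1 + a * z ^ n).valuation := by
    rw [hu]; exact ((Int.even_coe_nat n).mpr hn).mul_right _
  exact Int.not_even_iff_odd.mpr (odd_valuation_of_sq_eq_p_mul hu0 h) heven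

end Padic

namespace PadicInt

variable {p : ℕ} [Fact p.Prime]

lemma toZMod_eq_zero_iff {x : ℤ_[p]} : toZMod x = 0 ↔ ‖x‖ < 1 := by
  rw [← RingHom.mem_ker, ker_toZMod, IsLocalRing.mem_maximalIdeal, mem_nonunits]

lemma norm_lt_one_of_sq_eq_p_mul {u : ℤ_[p]} {w : ℚ_[p]} (h : w ^ 2 = p * u) : ‖u‖ < 1 := by
  rcases eq_or_ne u 0 with rfl | hu
  · simp
  have hu' : (u : ℚ_[p]) ≠ 0 := by simpa using hu
  have hodd := Padic.odd_valuation_of_sq_eq_p_mul hu' h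
  refine (norm_le_one u).lt_of_ne fun h1 => ?_
  rw [norm_def, Padic.norm_eq_one_iff_valuation_eq_zero hu'] at h1
  exact Int.not_even_iff_odd.mpr hodd (by rw [h1]; exact Even.zero)

open Polynomial in
lemma exists_pow_eq_of_toZMod_pow_eq {n : ℕ} (hn : (n : ZMod p) ≠ 0) {a x : ℤ_[p]}
    (hx : toZMod x ≠ 0) (h : toZMod x ^ n = toZMod a) : ∃ y : ℤ_[p], y ^ n = a := by
  have norm_eq_one {u : ℤ_[p]} (hu : toZMod u ≠ 0) : ‖u‖ = 1 :=
    (norm_le_one u).eq_of_not_lt (mt toZMod_eq_zero_iff.mpr hu)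
  have hderiv : ‖(X ^ n - C a).derivative.aeval x‖ = 1 := by
    simp only [derivative_sub, derivative_X_pow, derivative_C, sub_zero, map_mul, map_natCast,
      map_pow, aeval_X, norm_mul, norm_pow, norm_eq_one hx, one_pow, mul_one]
    exact norm_eq_one (by simpa using hn)
  obtain ⟨y, hy, -⟩ := hensels_lemma (F := X ^ n - C a) (a := x)
    (by rw [hderiv, one_pow, ← toZMod_eq_zero_iff]; simp [h])
  exact ⟨y, by simpa [sub_eq_zero] using hy⟩

end PadicInt

namespace Padic

variable {p : ℕ} [Fact p.Prime]

lemma exists_zmod_pow_eq_neg_of_sq_eq {n a : ℕ} (hn : Even n) (hn0 : n ≠ 0) (ha : ¬ p ∣ a)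
    {z w : ℚ_[p]} (h : w ^ 2 = p + a * p * z ^ n) : ∃ ξ : ZMod p, ξ ^ n = -a := by
  have ha1 : ‖(a : ℚ_[p])‖ = 1 :=
    norm_natCast_eq_one_iff.mpr ((Nat.Prime.coprime_iff_not_dvd Fact.out).mpr ha)
  have hz := norm_le_one_of_sq_eq_p_mul_one_add_mul_pow (z := z) (w := w) hn hn0 ha1
    (by rw [h]; ring)
  let ζ : ℤ_[p] := ⟨z, hz⟩
  have hu := PadicInt.norm_lt_one_of_sq_eq_p_mul (u := 1 + (a : ℤ_[p]) * ζ ^ n) (w := w)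
    (by rw [h]; push_cast; ring)
  exact ⟨(PadicInt.toZMod ζ)⁻¹, inv_pow_eq_neg_of_one_add_mul_pow_eq_zero
    (by simpa using PadicInt.toZMod_eq_zero_iff.mpr hu)⟩

lemma exists_sq_eq_of_zmod_pow_eq_neg {n a : ℕ} (hn : ¬ p ∣ n) (ha : ¬ p ∣ a) {ξ : ZMod p}
    (hξ : ξ ^ n = -a) : ∃ z w : ℚ_[p], w ^ 2 = p + a * p * z ^ n := by
  have hn' : (n : ZMod p) ≠ 0 := by rwa [Ne, ZMod.natCast_eq_zero_iff]
  have hn0 : n ≠ 0 := by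
    rintro rfl
    exact hn (dvd_zero p)
  have hξ0 : ξ ≠ 0 := by
    rintro rfl
    rw [zero_pow hn0, eq_comm, neg_eq_zero, ZMod.natCast_eq_zero_iff] at hξ
    exact ha hξ
  obtain ⟨t, ht⟩ := PadicInt.exists_pow_eq_of_toZMod_pow_eq (a := -a)
    (x := ((ξ.cast : ℤ) : ℤ_[p])) hn' (by simpa using hξ0) (by simpa using hξ)
  obtain ⟨s, hs⟩ := PadicInt.exists_pow_eq_of_toZMod_pow_eq (a := 1 - p) (x := 1) hn'
    (by simp) (by simp)
  have htQ : (t : ℚ_[p]) ^ n = -a := by exact_mod_cast congrArg ((↑) : ℤ_[p] → ℚ_[p]) ht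
  have hsQ : (s : ℚ_[p]) ^ n = 1 - p := by exact_mod_cast congrArg ((↑) : ℤ_[p] → ℚ_[p]) hs
  have ht0 : (t : ℚ_[p]) ≠ 0 := by
    rintro h0
    rw [h0, zero_pow hn0, eq_comm, neg_eq_zero, Nat.cast_eq_zero] at htQ
    exact ha (htQ ▸ dvd_zero p)
  refine ⟨s / t, p, ?_⟩
  rw [div_pow]
  field_simp
  linear_combination ((p : ℚ_[p]) ^ 2 - p) * htQ - a * (p : ℚ_[p]) * hsQ

end Padic

theorem Cp_solvable_Qp_iff_of_one_mod_eight (p : ℕ) [Fact p.Prime] (h : p % 8 = 1) :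
    (∃ z w : ℚ_[p], w ^ 2 = (p : ℚ_[p]) + 18 * (p : ℚ_[p]) * z ^ 4) ↔
      ∃ x : ℤ, x ^ 4 ≡ -18 [ZMOD (p : ℤ)] := by
  have hp : p.Prime := Fact.out
  have h2 : ¬ p ∣ 2 := fun hd => by rw [Nat.prime_dvd_prime_iff_eq hp Nat.prime_two] at hd; omega
  have h3 : ¬ p ∣ 3 := fun hd => by rw [Nat.prime_dvd_prime_iff_eq hp Nat.prime_three] at hd; omega
  have h4 : ¬ p ∣ 4 := fun hd => h2 (hp.dvd_of_dvd_pow (show p ∣ 2 ^ 2 from hd))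
  have h18 : ¬ p ∣ 18 := fun hd => by
    rcases (Nat.Prime.dvd_mul hp).mp (show p ∣ 2 * 3 ^ 2 from hd) with hd | hd
    exacts [h2 hd, h3 (hp.dvd_of_dvd_pow hd)]
  rw [ZMod.exists_intCast_pow_modEq_iff]
  push_cast
  constructor
  · rintro ⟨z, w, hw⟩
    exact Padic.exists_zmod_pow_eq_neg_of_sq_eq (a := 18) (z := z) (w := w) (by decide) (by decide)
      h18 (by simpa using hw)
  · rintro ⟨ξ, hξ⟩
    simpa using Padic.exists_sq_eq_of_zmod_pow_eq_neg (a := 18) h4 h18 hξ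
end

section
/- Let p be a prime with p ≠ 2 and p ≠ 3. Then the equation w² = p + 18pz⁴ has solutions z, w in each of the fields ℚ₂, ℚ₃ and ℚ_p if and only if one of the following holds: p ≡ 11 or 19 (mod 24); or p ≡ 1 (mod 24) and 2 is a fourth power modulo p; or p ≡ 17 (mod 24) and 2 is not a fourth power modulo p. -/
/-!
If `b` is a unit of `ℤ_q`, every `ℚ_q`-solution of `w² = a + q b z⁴` has `z` integral: otherwise
clearing denominators gives `W² = q (q^(4k+3) a + b Z⁴)` with `Z` a unit, and then `q ∣ W` forces
`q ∣ b`. With `z` integral, reducing mod 8 at `q = 2` forces `p ≡ 1, 3 (mod 8)`, and at `q = p`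
the equation `W² = p (1 + 18 Z⁴)` forces `p ∣ 1 + 18 Z⁴`, so `-18 ≡ (Z⁻¹)⁴ (mod p)`; conversely
Hensel's lemma lifts the evident approximate solutions, and in `ℚ_3` there always is one.
For `p ≡ 3 (mod 8)` every square is a fourth power and `-18 = 9 · (-2)` is a square. For
`p ≡ 1 (mod 8)` the quartic character `a ↦ a^((p-1)/4)` gives `χ(-18) = χ(2) · (3 / p)`,
where `(3 / p) = (p / 3)` by quadratic reciprocity and `χ(2) = ±1` since `2` is a square.
-/

open Polynomial

universe u

theorem Prime.dvd_of_sq_eq_mul {R : Type*} [CommRing R] [IsDomain R] {π W U : R}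
    (hπ : Prime π) (h : W ^ 2 = π * U) : π ∣ U := by
  obtain ⟨V, rfl⟩ := hπ.dvd_of_dvd_pow (n := 2) ⟨U, h⟩
  exact ⟨V ^ 2, mul_left_cancel₀ hπ.ne_zero (by linear_combination -h)⟩

theorem IsCyclic.exists_pow_eq_iff {G : Type*} [CommGroup G] [IsCyclic G] [Finite G] {n : ℕ}
    (hn : n ∣ Nat.card G) (g : G) : (∃ x, x ^ n = g) ↔ g ^ (Nat.card G / n) = 1 := by
  have hle : (powMonoidHom n : G →* G).range ≤ (powMonoidHom (Nat.card G / n)).ker := by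
    rintro _ ⟨x, rfl⟩
    simp [← pow_mul, Nat.mul_div_cancel' hn, pow_card_eq_one']
  have hcard : Nat.card (powMonoidHom (Nat.card G / n) : G →* G).ker ≤
      Nat.card (powMonoidHom n : G →* G).range := by
    rw [card_powMonoidHom_range, card_powMonoidHom_ker, Nat.gcd_eq_right hn,
      Nat.gcd_eq_right (Nat.div_dvd_of_dvd hn)]
  exact SetLike.ext_iff.mp (Subgroup.eq_of_le_of_card_ge hle hcard) g

theorem HenselianLocalRing.exists_pow_eq_of_map {R K : Type u} [CommRing R]
    [HenselianLocalRing R] [Field K] (φ : R →+* K) (hφ : Function.Surjective φ) {n : ℕ}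
    (hn : (n : K) ≠ 0) {a : R} {x : K} (hx0 : x ≠ 0) (hx : x ^ n = φ a) : ∃ y, y ^ n = a := by
  have hn0 : n ≠ 0 := by rintro rfl; simp at hn
  have lift := ((HenselianLocalRing.TFAE R).out 0 2).mp ‹_›
  obtain ⟨y, hy, -⟩ := lift φ hφ (X ^ n - C a) (monic_X_pow_sub_C a hn0) x (by simp [hx])
    (by simp [derivative_X_pow, hn, hx0])
  exact ⟨y, by simpa [sub_eq_zero] using hy⟩

namespace ZMod

variable {p : ℕ} [Fact p.Prime]

theorem natCast_ne_zero_of_ne {q : ℕ} (hq : q.Prime) (h : p ≠ q) : (q : ZMod p) ≠ 0 :=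
  (natCast_eq_zero_iff q p).not.mpr fun hd ↦ h ((Nat.prime_dvd_prime_iff_eq Fact.out hq).mp hd)

theorem exists_pow_eq_iff_pow_eq_one {n : ℕ} (hn : n ∣ p - 1) {a : ZMod p} (ha : a ≠ 0) :
    (∃ x, x ^ n = a) ↔ a ^ ((p - 1) / n) = 1 := by
  have hn0 : n ≠ 0 := ne_zero_of_dvd_ne_zero (by have := (Fact.out : p.Prime).two_le; omega) hn
  obtain ⟨u, rfl⟩ := isUnit_iff_ne_zero.mpr ha
  have hcard : Nat.card (ZMod p)ˣ = p - 1 := by rw [Nat.card_eq_fintype_card, card_units]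
  rw [← Units.val_pow_eq_pow_val, Units.val_eq_one, ← hcard,
    ← IsCyclic.exists_pow_eq_iff (hcard ▸ hn)]
  constructor
  · rintro ⟨x, hx⟩
    have hx0 : x ≠ 0 := by rintro rfl; exact ha (by simpa [zero_pow hn0] using hx.symm)
    exact ⟨Units.mk0 x hx0, Units.ext (by simpa using hx)⟩
  · rintro ⟨v, rfl⟩
    exact ⟨v, by simp⟩

theorem exists_pow_four_eq_of_isSquare (hp : p % 4 = 3) {a : ZMod p} (ha : IsSquare a) :
    ∃ x, x ^ 4 = a := by
  obtain ⟨v, rfl⟩ := ha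
  refine ⟨v ^ ((p + 1) / 4), ?_⟩
  rw [← pow_mul, show (p + 1) / 4 * 4 = p + 1 by omega, pow_succ, pow_card]

theorem isSquare_three_iff (hp : p % 4 = 1) (hp3 : p ≠ 3) :
    IsSquare (3 : ZMod p) ↔ p % 3 = 1 := by
  have key := exists_sq_eq_prime_iff_of_mod_four_eq_one (q := 3) hp (by norm_num)
  rw [Nat.cast_ofNat, ← natCast_mod p 3] at key
  rw [key]
  have : p % 3 = 1 ∨ p % 3 = 2 := by
    have := (Nat.prime_dvd_prime_iff_eq Nat.prime_three Fact.out).not.mpr (Ne.symm hp3)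
    omega
  rcases this with h | h <;> simp only [h] <;> decide

theorem three_pow_div_two (hp : p % 4 = 1) (hp3 : p ≠ 3) :
    (3 : ZMod p) ^ (p / 2) = if p % 3 = 1 then 1 else -1 := by
  have h3 : (3 : ZMod p) ≠ 0 := by exact_mod_cast natCast_ne_zero_of_ne Nat.prime_three hp3
  split_ifs with h
  · exact (euler_criterion p h3).mp ((isSquare_three_iff hp hp3).mpr h)
  · exact (pow_div_two_eq_neg_one_or_one p h3).resolve_left
      fun h' ↦ h ((isSquare_three_iff hp hp3).mp ((euler_criterion p h3).mpr h'))

theorem neg_eighteen_pow_div_four (hp : p % 8 = 1) :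
    (-18 : ZMod p) ^ (p / 4) = 2 ^ (p / 4) * 3 ^ (p / 2) := by
  rw [show (-18 : ZMod p) = -1 * 2 * 3 ^ 2 by norm_num, mul_pow, mul_pow,
    Even.neg_one_pow ⟨p / 8, by omega⟩, one_mul, ← pow_mul, show 2 * (p / 4) = p / 2 by omega]

theorem exists_pow_four_eq_neg_eighteen_iff (hp : p % 8 = 1) (hp3 : p ≠ 3) :
    (∃ x : ZMod p, x ^ 4 = -18) ↔
      if p % 3 = 1 then ∃ x : ZMod p, x ^ 4 = 2 else ¬∃ x : ZMod p, x ^ 4 = 2 := by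
  have hp2 : p ≠ 2 := by omega
  have h2 : (2 : ZMod p) ≠ 0 := by exact_mod_cast natCast_ne_zero_of_ne Nat.prime_two hp2
  have h3 : (3 : ZMod p) ≠ 0 := by exact_mod_cast natCast_ne_zero_of_ne Nat.prime_three hp3
  have h4 : 4 ∣ p - 1 := by omega
  have h18 : (-18 : ZMod p) ≠ 0 := by
    rw [show (-18 : ZMod p) = -(2 * 3 ^ 2) by norm_num]
    exact neg_ne_zero.mpr (mul_ne_zero h2 (pow_ne_zero 2 h3))
  rw [exists_pow_eq_iff_pow_eq_one h4 h18,
    exists_pow_eq_iff_pow_eq_one h4 h2, show (p - 1) / 4 = p / 4 by omega,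
    neg_eighteen_pow_div_four hp, three_pow_div_two (by omega) hp3]
  split_ifs
  · rw [mul_one]
  · have hsq : (2 ^ (p / 4) : ZMod p) ^ 2 = 1 := by
      rw [← pow_mul, show p / 4 * 2 = p / 2 by omega,
        ← euler_criterion p h2, exists_sq_eq_two_iff hp2]
      exact Or.inl hp
    have hne : (-1 : ZMod p) ≠ 1 := fun h ↦ h2 (by linear_combination -h)
    rcases sq_eq_one_iff.mp hsq with h | h <;> simp [h, hne]

theorem exists_pow_modEq_iff (m n : ℕ) (a : ℤ) :
    (∃ x : ℤ, x ^ n ≡ a [ZMOD m]) ↔ ∃ x : ZMod m, x ^ n = a := by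
  simp_rw [← intCast_eq_intCast_iff, Int.cast_pow]
  exact ⟨fun ⟨x, hx⟩ ↦ ⟨x, hx⟩, fun ⟨x, hx⟩ ↦ ⟨x.valMinAbs, by simpa using hx⟩⟩

end ZMod

-- Mathlib only derives `HenselianRing ℤ_[p] (maximalIdeal ℤ_[p])`, from adic completeness.
instance PadicInt.henselianLocalRing (p : ℕ) [Fact p.Prime] : HenselianLocalRing ℤ_[p] where
  is_henselian f hf a₀ h₁ h₂ := HenselianRing.is_henselian f hf a₀ h₁ (h₂.map _)

section Padic

variable {q : ℕ} [Fact q.Prime]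

theorem Padic.exists_norm_pow_mul_eq_one {z : ℚ_[q]} (hz : 1 < ‖z‖) :
    ∃ k : ℕ, ‖(q : ℚ_[q]) ^ (k + 1) * z‖ = 1 := by
  have hq : (1 : ℝ) < q := mod_cast (Fact.out : q.Prime).one_lt
  have hnorm := Padic.norm_eq_zpow_neg_valuation (norm_pos_iff.mp (one_pos.trans hz))
  have hv : 0 < -z.valuation := by
    rwa [hnorm, one_lt_zpow_iff_right₀ hq] at hz
  refine ⟨(-z.valuation - 1).toNat, ?_⟩
  rw [norm_mul, norm_pow, Padic.norm_p, hnorm, inv_pow, ← zpow_natCast,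
    show (((-z.valuation - 1).toNat + 1 : ℕ) : ℤ) = -z.valuation by omega]
  exact inv_mul_cancel₀ (zpow_ne_zero _ (by positivity))

namespace PadicInt

theorem exists_sq_eq_of_modEq_one {n : ℤ} (hn : n ≡ 1 [ZMOD 8]) : ∃ s : ℤ_[2], s ^ 2 = n := by
  set F : ℤ_[2][X] := X ^ 2 - C (n : ℤ_[2])
  have hF : ‖aeval (1 : ℤ_[2]) F‖ ≤ (2 : ℝ) ^ (-3 : ℤ) := by
    simpa [F] using norm_int_le_pow_iff_dvd (p := 2) (n := 3) (k := 1 - n) |>.mpr hn.dvd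
  have hF' : ‖aeval (1 : ℤ_[2]) (derivative F)‖ = 2⁻¹ := by
    simpa [F, derivative_X_pow, one_add_one_eq_two] using norm_p (p := 2)
  obtain ⟨s, hs, -⟩ := hensels_lemma (F := F) (a := 1) (by
    rw [hF']
    exact lt_of_le_of_lt hF (by norm_num))
  exact ⟨s, sub_eq_zero.mp (by simpa [F] using hs)⟩

theorem exists_sq_eq_of_sq_eq_coe {A : ℤ_[q]} {w : ℚ_[q]} (h : w ^ 2 = A) :
    ∃ W : ℤ_[q], W ^ 2 = A := by
  have : ‖w‖ ^ 2 ≤ 1 := by rw [← norm_pow, h]; exact A.norm_le_one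
  exact ⟨⟨w, (pow_le_one_iff_of_nonneg (norm_nonneg w) two_ne_zero).mp this⟩, Subtype.ext h⟩

theorem exists_sq_eq_add_mul_pow_four {a b : ℤ_[q]} (hb : IsUnit b) {z w : ℚ_[q]}
    (h : w ^ 2 = a + q * b * z ^ 4) : ∃ Z W : ℤ_[q], W ^ 2 = a + q * b * Z ^ 4 := by
  by_cases hz : ‖z‖ ≤ 1
  · exact ⟨⟨z, hz⟩, exists_sq_eq_of_sq_eq_coe (by push_cast; exact h)⟩
  obtain ⟨k, hk⟩ := Padic.exists_norm_pow_mul_eq_one (not_le.mp hz)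
  set u := mkUnits hk
  obtain ⟨W, hW⟩ := exists_sq_eq_of_sq_eq_coe (w := (q : ℚ_[q]) ^ (2 * (k + 1)) * w)
    (A := (q : ℤ_[q]) * ((q : ℤ_[q]) ^ (4 * k + 3) * a + b * (u : ℤ_[q]) ^ 4)) (by
      push_cast [u, mkUnits_eq]
      linear_combination (q : ℚ_[q]) ^ (4 * k + 4) * h)
  have hdvd : (q : ℤ_[q]) ∣ b * (u : ℤ_[q]) ^ 4 := (dvd_add_right
    ((dvd_pow_self (q : ℤ_[q]) (4 * k + 2).succ_ne_zero).mul_right a)).mp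
      (prime_p.dvd_of_sq_eq_mul hW)
  exact absurd (isUnit_of_dvd_unit hdvd (hb.mul (u.isUnit.pow 4))) prime_p.not_isUnit

end PadicInt

end Padic

namespace Cp

def SolvableAt (q : ℕ) [Fact q.Prime] (p : ℕ) : Prop :=
  ∃ z w : ℚ_[q], w ^ 2 = (p : ℚ_[q]) + 18 * (p : ℚ_[q]) * z ^ 4

theorem solvableAt_three {p : ℕ} (hp : p % 3 ≠ 0) : SolvableAt 3 p := by
  have sqrt : ∀ n : ℕ, n % 3 = 1 → ∃ s : ℤ_[3], s ^ 2 = n := fun n hn ↦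
    HenselianLocalRing.exists_pow_eq_of_map PadicInt.toZMod (ZMod.ringHom_surjective _)
      (by decide) one_ne_zero (by rw [map_natCast, ← ZMod.natCast_mod, hn]; simp)
  rcases (by omega : p % 3 = 1 ∨ p % 3 = 2) with h | h
  · obtain ⟨s, hs⟩ := sqrt p h
    refine ⟨0, s, ?_⟩
    have : (s : ℚ_[3]) ^ 2 = p := by exact_mod_cast congrArg ((↑) : ℤ_[3] → ℚ_[3]) hs
    simp [this]
  · obtain ⟨s, hs⟩ := sqrt (11 * p) (by omega)
    refine ⟨3⁻¹, s / 3, ?_⟩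
    have : (s : ℚ_[3]) ^ 2 = 11 * p := by exact_mod_cast congrArg ((↑) : ℤ_[3] → ℚ_[3]) hs
    field_simp
    linear_combination 9 * this

theorem val_eq_one_or_three_of_sq_eq (r c ζ : ZMod 8) (hr : r.val % 2 = 1)
    (h : c ^ 2 = r + 2 * (9 * r) * ζ ^ 4) : r.val = 1 ∨ r.val = 3 := by
  revert r c ζ
  decide

theorem solvableAt_two_iff {p : ℕ} (hp : p % 2 = 1) :
    SolvableAt 2 p ↔ p % 8 = 1 ∨ p % 8 = 3 := by
  constructor
  · rintro ⟨z, w, h⟩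
    have hb : IsUnit ((9 * p : ℕ) : ℤ_[2]) :=
      PadicInt.isUnit_iff.mpr (PadicInt.norm_natCast_eq_one_iff.mpr (Nat.coprime_two_left.mpr
        (Nat.odd_iff.mpr (by omega))))
    obtain ⟨Z, W, hW⟩ := PadicInt.exists_sq_eq_add_mul_pow_four (a := p) hb (z := z) (w := w)
      (by simp only [PadicInt.coe_natCast]; push_cast; linear_combination h)
    have h8 := congrArg (PadicInt.toZModPow 3) hW
    simp only [map_pow, map_add, map_mul, map_natCast, Nat.cast_mul] at h8
    simpa [ZMod.val_natCast] using
      val_eq_one_or_three_of_sq_eq _ _ _ (by rw [ZMod.val_natCast]; omega) h8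
  · rintro (h | h)
    · obtain ⟨s, hs⟩ := PadicInt.exists_sq_eq_of_modEq_one (n := p) (by
        simp only [Int.ModEq]; omega)
      refine ⟨0, s, ?_⟩
      have : (s : ℚ_[2]) ^ 2 = p := by exact_mod_cast congrArg ((↑) : ℤ_[2] → ℚ_[2]) hs
      simp [this]
    · obtain ⟨s, hs⟩ := PadicInt.exists_sq_eq_of_modEq_one (n := 19 * p) (by
        simp only [Int.ModEq]; omega)
      refine ⟨1, s, ?_⟩
      have : (s : ℚ_[2]) ^ 2 = 19 * p := by exact_mod_cast congrArg ((↑) : ℤ_[2] → ℚ_[2]) hs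
      linear_combination this

theorem solvableAt_self_iff {p : ℕ} [Fact p.Prime] (hp2 : p ≠ 2) (hp3 : p ≠ 3) :
    SolvableAt p p ↔ ∃ x : ZMod p, x ^ 4 = -18 := by
  have hpp : p.Prime := Fact.out
  have h2 : (2 : ZMod p) ≠ 0 := by exact_mod_cast ZMod.natCast_ne_zero_of_ne Nat.prime_two hp2
  have h3 : (3 : ZMod p) ≠ 0 := by exact_mod_cast ZMod.natCast_ne_zero_of_ne Nat.prime_three hp3
  have h18 : (18 : ZMod p) ≠ 0 := by
    rw [show (18 : ZMod p) = 2 * 3 ^ 2 by norm_num]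
    exact mul_ne_zero h2 (pow_ne_zero 2 h3)
  constructor
  · rintro ⟨z, w, h⟩
    have hb : IsUnit ((18 : ℕ) : ℤ_[p]) :=
      PadicInt.isUnit_iff.mpr (PadicInt.norm_natCast_eq_one_iff.mpr
        (Nat.Coprime.mul_right ((Nat.coprime_primes hpp Nat.prime_two).mpr hp2)
          (Nat.Coprime.pow_right 2 ((Nat.coprime_primes hpp Nat.prime_three).mpr hp3))))
    obtain ⟨Z, W, hW⟩ := PadicInt.exists_sq_eq_add_mul_pow_four (a := p) hb (z := z) (w := w)
      (by simp only [PadicInt.coe_natCast]; push_cast; linear_combination h)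
    obtain ⟨c, hc⟩ := PadicInt.prime_p.dvd_of_sq_eq_mul (U := 1 + 18 * Z ^ 4) (by
      rw [hW]; push_cast; ring)
    have hζ := congrArg PadicInt.toZMod hc
    simp only [map_add, map_one, map_mul, map_pow, map_ofNat, map_natCast, ZMod.natCast_self,
      zero_mul] at hζ
    have hζ0 : PadicInt.toZMod Z ≠ 0 := by rintro h0; simp [h0] at hζ
    refine ⟨(PadicInt.toZMod Z)⁻¹, ?_⟩
    field_simp
    linear_combination hζ
  · rintro ⟨x, hx⟩
    have hx0 : x ≠ 0 := by rintro rfl; exact h18 (by simpa using hx.symm)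
    obtain ⟨y, hy⟩ := HenselianLocalRing.exists_pow_eq_of_map PadicInt.toZMod
      (ZMod.ringHom_surjective _) (a := -18) (by exact_mod_cast pow_ne_zero 2 h2) hx0
      (by rw [map_neg, map_ofNat]; exact hx)
    have hy' : (y : ℚ_[p]) ^ 4 = -18 := by exact_mod_cast congrArg ((↑) : ℤ_[p] → ℚ_[p]) hy
    have hy0 : (y : ℚ_[p]) ≠ 0 := by rintro h0; norm_num [h0] at hy'
    refine ⟨(y : ℚ_[p])⁻¹, 0, ?_⟩
    field_simp
    linear_combination -(p : ℚ_[p]) * hy'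

theorem mod_eight_and_exists_pow_four_eq_neg_eighteen_iff {p : ℕ} [Fact p.Prime] (hp2 : p ≠ 2)
    (hp3 : p ≠ 3) :
    ((p % 8 = 1 ∨ p % 8 = 3) ∧ ∃ x : ZMod p, x ^ 4 = -18) ↔
      ((p % 24 = 11 ∨ p % 24 = 19) ∨
        (p % 24 = 1 ∧ ∃ x : ZMod p, x ^ 4 = 2) ∨
        (p % 24 = 17 ∧ ¬∃ x : ZMod p, x ^ 4 = 2)) := by
  have hpp : p.Prime := Fact.out
  have hodd : p % 2 = 1 := Nat.odd_iff.mp (hpp.odd_of_ne_two hp2)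
  have h3 : p % 3 ≠ 0 := fun h ↦
    hp3 ((Nat.prime_dvd_prime_iff_eq Nat.prime_three hpp).mp (Nat.dvd_of_mod_eq_zero h)).symm
  rcases (by omega : p % 8 = 1 ∨ p % 8 = 3 ∨ p % 8 = 5 ∨ p % 8 = 7) with h | h | h | h
  · rw [ZMod.exists_pow_four_eq_neg_eighteen_iff h hp3]
    by_cases h31 : p % 3 = 1
    · simp [h, h31, show p % 24 = 1 by omega]
    · simp [h, h31, show p % 24 = 17 by omega]
  · have hsq : IsSquare (-18 : ZMod p) := by
      obtain ⟨b, hb⟩ := (ZMod.exists_sq_eq_neg_two_iff hp2).mpr (Or.inr h)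
      exact ⟨3 * b, by linear_combination 9 * hb⟩
    have h24 : p % 24 = 11 ∨ p % 24 = 19 := by omega
    simp [h, h24, ZMod.exists_pow_four_eq_of_isSquare (by omega) hsq]
  all_goals
    refine iff_of_false ?_ ?_
    · rintro ⟨h8 | h8, -⟩ <;> omega
    · rintro ((h24 | h24) | ⟨h24, -⟩ | ⟨h24, -⟩) <;> omega

end Cp

theorem Cp_locally_solvable_iff (p : ℕ) [Fact p.Prime] (hp2 : p ≠ 2) (hp3 : p ≠ 3) :
    ((∃ z w : ℚ_[2], w ^ 2 = (p : ℚ_[2]) + 18 * (p : ℚ_[2]) * z ^ 4) ∧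
      (∃ z w : ℚ_[3], w ^ 2 = (p : ℚ_[3]) + 18 * (p : ℚ_[3]) * z ^ 4) ∧
      (∃ z w : ℚ_[p], w ^ 2 = (p : ℚ_[p]) + 18 * (p : ℚ_[p]) * z ^ 4)) ↔
      ((p % 24 = 11 ∨ p % 24 = 19) ∨
        (p % 24 = 1 ∧ ∃ x : ℤ, x ^ 4 ≡ 2 [ZMOD (p : ℤ)]) ∨
        (p % 24 = 17 ∧ ¬∃ x : ℤ, x ^ 4 ≡ 2 [ZMOD (p : ℤ)])) := by
  have hpp : p.Prime := Fact.out
  have hodd : p % 2 = 1 := Nat.odd_iff.mp (hpp.odd_of_ne_two hp2)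
  have h3 : p % 3 ≠ 0 := fun h ↦
    hp3 ((Nat.prime_dvd_prime_iff_eq Nat.prime_three hpp).mp (Nat.dvd_of_mod_eq_zero h)).symm
  change Cp.SolvableAt 2 p ∧ Cp.SolvableAt 3 p ∧ Cp.SolvableAt p p ↔ _
  rw [Cp.solvableAt_two_iff hodd, Cp.solvableAt_self_iff hp2 hp3,
    iff_true_intro (Cp.solvableAt_three h3), true_and, ZMod.exists_pow_modEq_iff, Int.cast_ofNat]
  exact Cp.mod_eight_and_exists_pow_four_eq_neg_eighteen_iff hp2 hp3
end

section
/- Let p be a prime with p ≠ 2 and p ≠ 3. Then the equation w² = p − 72pz⁴ has solutions z, w in each of the fields ℝ, ℚ₂, ℚ₃ and ℚ_p if and only if p ≡ 1 (mod 24) and 2 is a fourth power modulo p. -/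
/-!
A `ℚ_q`-point of `w² = p - 72 p z⁴` can be moved into `ℤ_q`, either directly or, when `z` is
not integral, after writing `z = 1 / (q u)` and clearing denominators, which gives
`w² = p (q u)⁴ - 72 p`. Reducing these integral equations modulo `8`
and `16` (for `q = 2`) or `3` and `27` (for `q = 3`) forces `p ≡ 1 mod 8` and `p ≡ 1 mod 3`.
For `q = p`, a square divisible by `p` is divisible by `p²`, so `p ∣ 1 - 72 z⁴`, i.e. `72` is a
fourth power modulo `p`. Conversely Hensel's lemma lifts these congruences to points with
`z = 0` or `w = 0`. Finally, for `p ≡ 1 mod 24` both `2` and `3` are squares modulo `p`, so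
`72 = 2 · 6²` is a fourth power modulo `p` exactly when `2` is.
-/

theorem Prime.dvd_of_sq_eq_mul_s16 {R : Type*} [CommMonoidWithZero R] [IsCancelMulZero R] {π w c : R}
    (hπ : Prime π) (h : w ^ 2 = π * c) : π ∣ c := by
  obtain ⟨k, rfl⟩ := hπ.dvd_of_dvd_pow (h ▸ dvd_mul_right π c)
  exact ⟨k ^ 2, mul_left_cancel₀ hπ.ne_zero (by rw [← h, mul_pow, sq π, mul_assoc])⟩

theorem exists_pow_eq_mul_pow_iff {G : Type*} [CommGroupWithZero G] {a s : G} (hs : s ≠ 0)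
    (n : ℕ) : (∃ y : G, y ^ n = a * s ^ n) ↔ ∃ x : G, x ^ n = a := by
  constructor
  · rintro ⟨y, hy⟩
    exact ⟨y / s, by rw [div_pow, hy, mul_div_cancel_right₀ a (pow_ne_zero n hs)]⟩
  · rintro ⟨x, rfl⟩
    exact ⟨x * s, mul_pow x s n⟩

theorem Int.exists_pow_modEq_iff (m n : ℕ) (a : ℤ) :
    (∃ x : ℤ, x ^ n ≡ a [ZMOD m]) ↔ ∃ x : ZMod m, x ^ n = a := by
  constructor
  · rintro ⟨x, hx⟩
    exact ⟨x, by exact_mod_cast (ZMod.intCast_eq_intCast_iff _ _ _).mpr hx⟩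
  · rintro ⟨x, hx⟩
    refine ⟨x.cast, (ZMod.intCast_eq_intCast_iff _ _ _).mp ?_⟩
    rw [Int.cast_pow, ZMod.intCast_zmod_cast, hx]

namespace PadicInt

open Polynomial

variable {q : ℕ} [Fact q.Prime]

theorem exists_sq_eq_of_norm_sub_one_lt_s16 {c : ℤ_[q]} (h : ‖c - 1‖ < ‖(2 : ℤ_[q])‖ ^ 2) :
    IsSquare c := by
  have hF : ‖(X ^ 2 - C c : ℤ_[q][X]).eval 1‖ <
      ‖(derivative (X ^ 2 - C c : ℤ_[q][X])).eval 1‖ ^ 2 := by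
    simpa [one_add_one_eq_two, ← norm_neg (1 - c)] using h
  obtain ⟨w, hw, -⟩ := hensels_lemma hF
  simp only [coe_aeval_eq_eval, eval_sub, eval_pow, eval_X, eval_C] at hw
  exact ⟨w, by linear_combination -hw⟩

theorem exists_pow_eq_of_toZMod {n : ℕ} (hn : (n : ZMod q) ≠ 0) {a : ℤ_[q]} {x : ZMod q}
    (hx : x ≠ 0) (h : x ^ n = toZMod a) : ∃ y : ℤ_[q], y ^ n = a := by
  have hn0 : n ≠ 0 := by rintro rfl; exact hn Nat.cast_zero
  have hx₀ : toZMod (ZMod.cast x : ℤ_[q]) = x := by simp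
  have hroot : (X ^ n - C a).eval (ZMod.cast x) ∈ IsLocalRing.maximalIdeal ℤ_[q] := by
    rw [← ker_toZMod, RingHom.mem_ker]
    simp [hx₀, h]
  have hsimple : IsUnit ((derivative (X ^ n - C a)).eval (ZMod.cast x : ℤ_[q])) := by
    rw [← IsLocalRing.notMem_maximalIdeal, ← ker_toZMod, RingHom.mem_ker]
    simp [derivative_X_pow, hx₀, hn, hx]
  obtain ⟨y, hy, -⟩ := HenselianRing.is_henselian _ (monic_X_pow_sub_C a hn0) _ hroot
    (hsimple.map _)
  exact ⟨y, by simpa [sub_eq_zero] using hy⟩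

theorem toZMod_eq_zero_of_sq_eq_mul {w c : ℤ_[q]} (h : w ^ 2 = q * c) : toZMod c = 0 := by
  simpa using map_dvd toZMod (Prime.dvd_of_sq_eq_mul_s16 prime_p h)

end PadicInt

namespace Padic

variable {q : ℕ} [Fact q.Prime]

theorem exists_padicInt_sq_eq {w : ℚ_[q]} {x : ℤ_[q]} (h : w ^ 2 = x) :
    ∃ W : ℤ_[q], W ^ 2 = x := by
  have hw : ‖w‖ ≤ 1 := by
    rw [← pow_le_one_iff_of_nonneg (norm_nonneg w) two_ne_zero, ← norm_pow, h]
    exact x.norm_le_one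
  exact ⟨⟨w, hw⟩, PadicInt.ext h⟩

theorem exists_padicInt_sq_eq_sub_mul_pow_four {c d : ℤ_[q]} {z w : ℚ_[q]}
    (h : w ^ 2 = c - d * z ^ 4) :
    (∃ W Z : ℤ_[q], W ^ 2 = c - d * Z ^ 4) ∨ ∃ W U : ℤ_[q], W ^ 2 = c * (q * U) ^ 4 - d := by
  by_cases hz : ‖z‖ ≤ 1
  · obtain ⟨W, hW⟩ := exists_padicInt_sq_eq (x := c - d * ⟨z, hz⟩ ^ 4)
      (by push_cast; exact h)
    exact .inl ⟨W, _, hW⟩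
  · have hz0 : z ≠ 0 := by rintro rfl; simp at hz
    have hu : ‖z⁻¹‖ < 1 := by
      rw [norm_inv]; exact inv_lt_one_of_one_lt₀ (not_le.mp hz)
    obtain ⟨U, hU⟩ := (PadicInt.norm_lt_one_iff_dvd ⟨z⁻¹, hu.le⟩).mp hu
    obtain ⟨W, hW⟩ := exists_padicInt_sq_eq (w := w * z⁻¹ ^ 2)
        (x := c * ((q : ℤ_[q]) * U) ^ 4 - d) (by
      rw [PadicInt.coe_sub, PadicInt.coe_mul, PadicInt.coe_pow, ← hU]
      push_cast
      field_simp
      linear_combination h)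
    exact .inr ⟨W, U, hW⟩

end Padic

theorem ZMod.isSquare_six {p : ℕ} [Fact p.Prime] (hp : p % 24 = 1) : IsSquare (6 : ZMod p) := by
  have h2 : IsSquare (2 : ZMod p) := (ZMod.exists_sq_eq_two_iff (by omega)).mpr (.inl (by omega))
  have h3 : IsSquare ((3 : ℕ) : ZMod p) :=
    (ZMod.exists_sq_eq_prime_iff_of_mod_four_eq_one (by omega) (by norm_num)).mpr (by
      rw [← ZMod.natCast_mod, show p % 3 = 1 by omega, Nat.cast_one]
      exact IsSquare.one)
  rw [show (6 : ZMod p) = 2 * ((3 : ℕ) : ZMod p) by norm_num]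
  exact h2.mul h3

def HasCpPoint (K : Type*) [CommRing K] (p : ℕ) : Prop :=
  ∃ z w : K, w ^ 2 = (p : K) - 72 * (p : K) * z ^ 4

section HasCpPoint

variable {K : Type*} [CommRing K] {p : ℕ}

theorem HasCpPoint.of_isSquare (h : IsSquare (p : K)) : HasCpPoint K p := by
  obtain ⟨w, hw⟩ := h
  exact ⟨0, w, by rw [hw]; ring⟩

theorem HasCpPoint.of_mul_pow_four_eq_one {z : K} (hz : 72 * z ^ 4 = 1) : HasCpPoint K p :=
  ⟨z, 0, by linear_combination (p : K) * hz⟩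

end HasCpPoint

theorem hasCpPoint_real (p : ℕ) : HasCpPoint ℝ p :=
  .of_isSquare ⟨√p, (Real.mul_self_sqrt p.cast_nonneg).symm⟩

theorem HasCpPoint.exists_padicInt {q p : ℕ} [Fact q.Prime] (h : HasCpPoint ℚ_[q] p) :
    (∃ W Z : ℤ_[q], W ^ 2 = p - 72 * p * Z ^ 4) ∨
      ∃ W U : ℤ_[q], W ^ 2 = p * (q * U) ^ 4 - 72 * p :=
  let ⟨_, _, h⟩ := h
  Padic.exists_padicInt_sq_eq_sub_mul_pow_four (c := p) (d := 72 * p) h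

theorem zmod8_of_sq_eq : ∀ P W Z : ZMod 8, P.val % 2 = 1 →
    W ^ 2 = P - 72 * P * Z ^ 4 → P.val = 1 := by
  decide

theorem zmod16_sq_ne : ∀ P W U : ZMod 16, P.val % 2 = 1 →
    W ^ 2 ≠ P * (2 * U) ^ 4 - 72 * P := by
  decide

theorem zmod3_of_sq_eq : ∀ P W Z : ZMod 3, P.val % 3 ≠ 0 →
    W ^ 2 = P - 72 * P * Z ^ 4 → P.val % 3 = 1 := by
  decide

theorem zmod27_of_sq_eq : ∀ P W U : ZMod 27, P.val % 3 ≠ 0 →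
    W ^ 2 = P * (3 * U) ^ 4 - 72 * P → P.val % 3 = 1 := by
  decide

theorem hasCpPoint_two_iff {p : ℕ} (hp : p % 2 = 1) : HasCpPoint ℚ_[2] p ↔ p % 8 = 1 := by
  constructor
  · intro h
    rcases h.exists_padicInt with ⟨W, Z, hW⟩ | ⟨W, U, hW⟩
    · have h8 := zmod8_of_sq_eq p (PadicInt.toZModPow 3 W) (PadicInt.toZModPow 3 Z)
        (by rw [ZMod.val_natCast]; omega)
        (by simpa [map_ofNat] using congrArg (PadicInt.toZModPow 3) hW)
      rwa [ZMod.val_natCast] at h8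
    · exact absurd (by simpa [map_ofNat] using congrArg (PadicInt.toZModPow 4) hW)
        (zmod16_sq_ne p (PadicInt.toZModPow 4 W) (PadicInt.toZModPow 4 U)
          (by rw [ZMod.val_natCast]; omega))
  · intro h8
    have h2 : ‖(2 : ℤ_[2])‖ = 2⁻¹ := by simpa using PadicInt.norm_p (p := 2)
    have hp1 : ‖((p - 1 : ℤ) : ℤ_[2])‖ ≤ (2 : ℕ) ^ (-(3 : ℕ) : ℤ) :=
      PadicInt.norm_int_le_pow_iff_dvd.mpr (by omega)
    have hsq : IsSquare (p : ℤ_[2]) := PadicInt.exists_sq_eq_of_norm_sub_one_lt_s16 (by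
      rw [h2]
      norm_num at hp1 ⊢
      linarith)
    exact .of_isSquare (by simpa using hsq.map PadicInt.Coe.ringHom)

theorem hasCpPoint_three_iff {p : ℕ} (hp : p % 3 ≠ 0) : HasCpPoint ℚ_[3] p ↔ p % 3 = 1 := by
  constructor
  · intro h
    rcases h.exists_padicInt with ⟨W, Z, hW⟩ | ⟨W, U, hW⟩
    · have h3 := zmod3_of_sq_eq p (PadicInt.toZModPow 1 W) (PadicInt.toZModPow 1 Z)
        (by rw [ZMod.val_natCast]; omega)
        (by simpa [map_ofNat] using congrArg (PadicInt.toZModPow 1) hW)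
      rw [ZMod.val_natCast] at h3
      omega
    · have h3 := zmod27_of_sq_eq p (PadicInt.toZModPow 3 W) (PadicInt.toZModPow 3 U)
        (by rw [ZMod.val_natCast]; omega)
        (by simpa [map_ofNat] using congrArg (PadicInt.toZModPow 3) hW)
      rw [ZMod.val_natCast] at h3
      omega
  · intro h3
    have h2 : ‖(2 : ℤ_[3])‖ = 1 := by
      simpa using (PadicInt.norm_natCast_eq_one_iff (p := 3) (n := 2)).mpr (by norm_num)
    have hp1 : ‖((p - 1 : ℤ) : ℤ_[3])‖ < 1 := (PadicInt.norm_int_lt_one_iff_dvd _).mpr (by omega)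
    have hsq : IsSquare (p : ℤ_[3]) := PadicInt.exists_sq_eq_of_norm_sub_one_lt_s16 (by
      push_cast at hp1
      rwa [h2, one_pow])
    exact .of_isSquare (by simpa using hsq.map PadicInt.Coe.ringHom)

theorem hasCpPoint_self_iff {p : ℕ} [Fact p.Prime] (h72 : (72 : ZMod p) ≠ 0) :
    HasCpPoint ℚ_[p] p ↔ ∃ x : ZMod p, x ^ 4 = 72 := by
  constructor
  · intro h
    rcases h.exists_padicInt with ⟨W, Z, hW⟩ | ⟨W, U, hW⟩
    · have hZ := PadicInt.toZMod_eq_zero_of_sq_eq_mul (w := W) (c := 1 - 72 * Z ^ 4)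
        (by linear_combination hW)
      simp only [map_sub, map_one, map_mul, map_pow, map_ofNat, sub_eq_zero] at hZ
      exact ⟨(PadicInt.toZMod Z)⁻¹, by rw [inv_pow, eq_inv_of_mul_eq_one_left hZ.symm]⟩
    · have hU := PadicInt.toZMod_eq_zero_of_sq_eq_mul (w := W) (c := ((p : ℤ_[p]) * U) ^ 4 - 72)
        (by linear_combination hW)
      exact (h72 (by simpa [map_ofNat] using hU)).elim
  · rintro ⟨x, hx⟩
    have h4 : ((4 : ℕ) : ZMod p) ≠ 0 := fun h4 => h72 (by
      rw [show (72 : ZMod p) = ((4 : ℕ) : ZMod p) * 18 by norm_num, h4, zero_mul])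
    obtain ⟨y, hy⟩ := PadicInt.exists_pow_eq_of_toZMod h4 (ne_zero_pow four_ne_zero (hx ▸ h72))
      (a := 72) (by rw [hx, map_ofNat])
    have hy' : (y : ℚ_[p]) ^ 4 = 72 := by exact_mod_cast congrArg ((↑) : ℤ_[p] → ℚ_[p]) hy
    exact .of_mul_pow_four_eq_one (z := (y : ℚ_[p])⁻¹)
      (by rw [inv_pow, hy', mul_inv_cancel₀ (by norm_num)])

theorem dual_Cp_locally_solvable_iff (p : ℕ) [Fact p.Prime] (hp2 : p ≠ 2) (hp3 : p ≠ 3) :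
    ((∃ z w : ℝ, w ^ 2 = (p : ℝ) - 72 * (p : ℝ) * z ^ 4) ∧
      (∃ z w : ℚ_[2], w ^ 2 = (p : ℚ_[2]) - 72 * (p : ℚ_[2]) * z ^ 4) ∧
      (∃ z w : ℚ_[3], w ^ 2 = (p : ℚ_[3]) - 72 * (p : ℚ_[3]) * z ^ 4) ∧
      (∃ z w : ℚ_[p], w ^ 2 = (p : ℚ_[p]) - 72 * (p : ℚ_[p]) * z ^ 4)) ↔
      (p % 24 = 1 ∧ ∃ x : ℤ, x ^ 4 ≡ 2 [ZMOD (p : ℤ)]) := by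
  have hp : p.Prime := Fact.out
  have h72 : (72 : ZMod p) ≠ 0 := by
    rw [show (72 : ZMod p) = (2 : ℕ) ^ 3 * (3 : ℕ) ^ 2 by norm_num]
    exact mul_ne_zero (pow_ne_zero _ (ZMod.prime_ne_zero p 2 hp2))
      (pow_ne_zero _ (ZMod.prime_ne_zero p 3 hp3))
  have hp_odd : p % 2 = 1 := hp.mod_two_eq_one_iff_ne_two.mpr hp2
  have hp_three : p % 3 ≠ 0 := fun h =>
    hp3 ((Nat.prime_dvd_prime_iff_eq Nat.prime_three hp).mp (Nat.dvd_of_mod_eq_zero h)).symm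
  change HasCpPoint ℝ p ∧ HasCpPoint ℚ_[2] p ∧ HasCpPoint ℚ_[3] p ∧ HasCpPoint ℚ_[p] p ↔ _
  rw [hasCpPoint_two_iff hp_odd, hasCpPoint_three_iff hp_three, hasCpPoint_self_iff h72,
    Int.exists_pow_modEq_iff]
  simp only [hasCpPoint_real, true_and, Int.cast_ofNat]
  by_cases h24 : p % 24 = 1
  · obtain ⟨s, hs⟩ := ZMod.isSquare_six h24
    have h72_eq : (72 : ZMod p) = 2 * s ^ 4 := by
      linear_combination 2 * (6 + s * s) * hs
    rw [h72_eq, exists_pow_eq_mul_pow_iff (fun hs0 => h72 (by rw [h72_eq, hs0]; ring)) 4]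
    simp only [h24, true_and, show p % 8 = 1 by omega, show p % 3 = 1 by omega]
  · simp only [h24, false_and, iff_false, not_and]
    omega
end
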